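/- arXiv:1407.8534 — 10 statements merged into one kernel-verified Lean document; each statement's English description precedes it below -/
import Mathlib

section
/- For any ℓ ≥ 1 and distinct complex numbers z_1,…,z_ℓ, the symmetrization identity ∑_{ω ∈ S(ℓ)} ∏_{1 ≤ B < A ≤ ℓ} (z_{ω(A)} - q z_{ω(B)})/(z_{ω(A)} - z_{ω(B)}) = (q;q)_ℓ / (1-q)^ℓ holds, where (q;q)_ℓ = ∏_{j=1}^ℓ (1 - q^j). -/
/-!
Split a permutation `ω` of `Fin (ℓ + 1)` according to `k = ω 0`. The pairs that involve
position `0` contribute `∏_{i ≠ k} (z_i - q z_k) / (z_i - z_k)`, and the other pairs give the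
same sum in `ℓ` variables, so by induction everything reduces to
`(1 - q) ∑_k ∏_{i ≠ k} (z_i - q z_k) / (z_i - z_k) = 1 - q ^ (ℓ + 1)`.
For the nodal polynomial `W = ∏_i (X - z_i)` and its `q`-difference `D W = (W(qX) - W(X)) / X`
one has `(D W)(z_k) = (q - 1) ∏_{i ≠ k} (q z_k - z_i)`, so the sum is `1 / (q - 1)` times the
Lagrange formula for the coefficient of `X ^ ℓ` in `D W`, which is `q ^ (ℓ + 1) - 1`.
-/

open Finset Polynomial

namespace Polynomial

variable {R : Type*} [CommRing R]

noncomputable def qDiff (q : R) (p : R[X]) : R[X] := divX (p.comp (C q * X) - p)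

theorem X_mul_qDiff (q : R) (p : R[X]) : X * qDiff q p = p.comp (C q * X) - p := by
  have h := X_mul_divX_add (p.comp (C q * X) - p)
  rwa [coeff_sub, comp_C_mul_X_coeff, pow_zero, mul_one, sub_self, C_0, add_zero] at h

theorem coeff_qDiff (q : R) (p : R[X]) (n : ℕ) :
    (qDiff q p).coeff n = (q ^ (n + 1) - 1) * p.coeff (n + 1) := by
  rw [qDiff, coeff_divX, coeff_sub, comp_C_mul_X_coeff]
  ring

theorem degree_qDiff_lt (q : R) (p : R[X]) : (qDiff q p).degree < p.natDegree := by
  refine (degree_lt_iff_coeff_zero _ _).2 fun m hm => ?_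
  rw [coeff_qDiff, coeff_eq_zero_of_natDegree_lt (by omega), mul_zero]

theorem qDiff_X_sub_C_mul (q c : R) (p : R[X]) :
    qDiff q ((X - C c) * p) = C (q - 1) * p.comp (C q * X) + (X - C c) * qDiff q p := by
  refine isRegular_X.left ?_
  simp only [X_mul_qDiff, mul_add, mul_comp, sub_comp, X_comp, C_comp]
  rw [mul_left_comm X (X - C c), X_mul_qDiff, C_sub, C_1]
  ring

end Polynomial

namespace Lagrange

variable {F ι : Type*} [Field F] {s : Finset ι} {v : ι → F}

theorem eval_qDiff_nodal [DecidableEq ι] (q : F) {i : ι} (hi : i ∈ s) :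
    (qDiff q (nodal s v)).eval (v i) = (q - 1) * ∏ j ∈ s.erase i, (q * v i - v j) := by
  rw [nodal_eq_mul_nodal_erase hi, qDiff_X_sub_C_mul]
  simp [eval_nodal]

theorem coeff_qDiff_nodal (q : F) : (qDiff q (nodal s v)).coeff (#s - 1) = q ^ #s - 1 := by
  rcases s.eq_empty_or_nonempty with rfl | hs
  · simp [coeff_qDiff, coeff_one]
  · rw [coeff_qDiff, Nat.sub_add_cancel hs.card_pos, ← natDegree_nodal (v := v),
      nodal_monic.coeff_natDegree, mul_one]

theorem one_sub_mul_sum_prod_div [DecidableEq ι] (q : F) (hv : Set.InjOn v s) :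
    (1 - q) * ∑ i ∈ s, ∏ j ∈ s.erase i, (v j - q * v i) / (v j - v i) = 1 - q ^ #s := by
  have h := coeff_eq_sum hv ((degree_qDiff_lt q (nodal s v)).trans_eq (by rw [natDegree_nodal]))
  rw [coeff_qDiff_nodal] at h
  have hterm : ∀ i ∈ s, (qDiff q (nodal s v)).eval (v i) / ∏ j ∈ s.erase i, (v i - v j)
      = (q - 1) * ∏ j ∈ s.erase i, (v j - q * v i) / (v j - v i) := fun i hi => by
    rw [eval_qDiff_nodal q hi, mul_div_assoc, ← prod_div_distrib]
    congr 1
    exact prod_congr rfl fun j _ => (neg_div_neg_eq _ _).symm.trans (by rw [neg_sub, neg_sub])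
  rw [sum_congr rfl hterm, ← mul_sum] at h
  linear_combination h

end Lagrange

namespace Fin

variable {M : Type*} [CommMonoid M] {n : ℕ}

theorem prod_filter_lt_succ (f : Fin (n + 1) → Fin (n + 1) → M) :
    ∏ p ∈ univ.filter (fun p : Fin (n + 1) × Fin (n + 1) => p.1 < p.2), f p.1 p.2
      = (∏ j : Fin n, f 0 j.succ) *
        ∏ p ∈ univ.filter (fun p : Fin n × Fin n => p.1 < p.2), f p.1.succ p.2.succ := by
  simp only [prod_filter, Fintype.prod_prod_type, prod_univ_succ (n := n), succ_pos,
    succ_lt_succ_iff, not_lt_zero, if_true, if_false, one_mul]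

theorem prod_swap_zero_succ (g : Fin (n + 1) → M) (k : Fin (n + 1)) :
    ∏ j : Fin n, g (Equiv.swap 0 k j.succ) = ∏ i ∈ univ.erase k, g i := by
  have h : ∏ j : Fin n, g (Equiv.swap 0 k j.succ)
      = ∏ i ∈ univ.erase 0, g (Equiv.swap 0 k i) := by
    rw [univ_succ, erase_cons, prod_map]
    rfl
  rw [h]
  exact prod_equiv (Equiv.swap 0 k) (by simp [Equiv.swap_apply_eq_iff]) fun _ _ => rfl

end Fin

section

variable {F : Type*} [Field F] {n : ℕ}

def pairRatioProd (q : F) (z : Fin n → F) : F :=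
  ∏ p ∈ univ.filter (fun p : Fin n × Fin n => p.1 < p.2), (z p.2 - q * z p.1) / (z p.2 - z p.1)

theorem pairRatioProd_succ (q : F) (z : Fin (n + 1) → F) :
    pairRatioProd q z
      = (∏ j : Fin n, (z j.succ - q * z 0) / (z j.succ - z 0)) * pairRatioProd q (Fin.tail z) :=
  Fin.prod_filter_lt_succ fun a b => (z b - q * z a) / (z b - z a)

theorem pairRatioProd_comp_decomposeFin_symm (q : F) (z : Fin (n + 1) → F)
    (k : Fin (n + 1)) (σ : Equiv.Perm (Fin n)) :
    pairRatioProd q (z ∘ Equiv.Perm.decomposeFin.symm (k, σ))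
      = (∏ i ∈ univ.erase k, (z i - q * z k) / (z i - z k)) *
        pairRatioProd q ((fun j => z (Equiv.swap 0 k j.succ)) ∘ σ) := by
  have htail : Fin.tail (z ∘ Equiv.Perm.decomposeFin.symm (k, σ))
      = (fun j => z (Equiv.swap 0 k j.succ)) ∘ σ := by
    ext j
    simp [Fin.tail, Equiv.Perm.decomposeFin_symm_apply_succ]
  rw [pairRatioProd_succ, htail]
  congr 1
  simp only [Function.comp_apply, Equiv.Perm.decomposeFin_symm_apply_zero,
    Equiv.Perm.decomposeFin_symm_apply_succ]
  exact (Equiv.prod_comp σ _).trans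
    (Fin.prod_swap_zero_succ (fun i => (z i - q * z k) / (z i - z k)) k)

theorem one_sub_pow_mul_sum_pairRatioProd (q : F) (z : Fin n → F)
    (hz : Function.Injective z) :
    (1 - q) ^ n * ∑ ω : Equiv.Perm (Fin n), pairRatioProd q (z ∘ ω)
      = ∏ j ∈ range n, (1 - q ^ (j + 1)) := by
  induction n with
  | zero => simp [pairRatioProd]
  | succ n ih =>
    set y : Fin (n + 1) → Fin n → F := fun k j => z (Equiv.swap 0 k j.succ)
    have hy (k : Fin (n + 1)) : Function.Injective (y k) :=
      hz.comp ((Equiv.swap 0 k).injective.comp (Fin.succ_injective n))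
    have hkey := Lagrange.one_sub_mul_sum_prod_div q (s := univ) hz.injOn
    rw [card_univ, Fintype.card_fin] at hkey
    calc (1 - q) ^ (n + 1) * ∑ ω : Equiv.Perm (Fin (n + 1)), pairRatioProd q (z ∘ ω)
        = ∑ k, (1 - q) * (∏ i ∈ univ.erase k, (z i - q * z k) / (z i - z k)) *
            ((1 - q) ^ n * ∑ σ : Equiv.Perm (Fin n), pairRatioProd q (y k ∘ σ)) := by
          rw [← Equiv.sum_comp Equiv.Perm.decomposeFin.symm, Fintype.sum_prod_type, mul_sum]
          refine sum_congr rfl fun k _ => ?_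
          simp only [pairRatioProd_comp_decomposeFin_symm, ← mul_sum]
          ring
      _ = (1 - q) * (∑ k, ∏ i ∈ univ.erase k, (z i - q * z k) / (z i - z k)) *
            ∏ j ∈ range n, (1 - q ^ (j + 1)) := by
          rw [mul_sum, sum_mul]
          exact sum_congr rfl fun k _ => by rw [ih _ (hy k)]
      _ = ∏ j ∈ range (n + 1), (1 - q ^ (j + 1)) := by
          rw [hkey, prod_range_succ, mul_comm]

end

theorem stmt1_general (ℓ : ℕ) (q : ℂ) (hq : q ≠ 1)
    (z : Fin ℓ → ℂ) (hz : Function.Injective z) :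
    ∑ ω : Equiv.Perm (Fin ℓ),
      ∏ p ∈ Finset.univ.filter (fun p : Fin ℓ × Fin ℓ => p.1 < p.2),
        (z (ω p.2) - q * z (ω p.1)) / (z (ω p.2) - z (ω p.1))
      = (∏ j ∈ Finset.range ℓ, (1 - q ^ (j + 1))) / (1 - q) ^ ℓ := by
  rw [eq_div_iff (pow_ne_zero ℓ (sub_ne_zero.2 hq.symm)), mul_comm]
  exact one_sub_pow_mul_sum_pairRatioProd q z hz

/-- The symmetrization identity
`∑_{ω ∈ S(ℓ)} ∏_{B<A} (z_{ω(A)} - q z_{ω(B)})/(z_{ω(A)} - z_{ω(B)}) = (q;q)_ℓ/(1-q)^ℓ`. -/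
theorem stmt1 (ℓ : ℕ) (hℓ : 1 ≤ ℓ) (q : ℂ) (hq : q ≠ 1)
    (z : Fin ℓ → ℂ) (hz : Function.Injective z) :
    ∑ ω : Equiv.Perm (Fin ℓ),
      ∏ p ∈ Finset.univ.filter (fun p : Fin ℓ × Fin ℓ => p.1 < p.2),
        (z (ω p.2) - q * z (ω p.1)) / (z (ω p.2) - z (ω p.1))
      = (∏ j ∈ Finset.range ℓ, (1 - q ^ (j + 1))) / (1 - q) ^ ℓ :=
  stmt1_general ℓ q hq z hz
end

section
/- For all integers m ≥ 0 and parameters 0 < q < 1, 0 ≤ ν ≤ μ < 1, the deformed binomial weights sum to one: ∑_{j=0}^m φ_{q,μ,ν}(j | m) = 1, where φ_{q,μ,ν}(j | m) = μ^j · (ν/μ;q)_j (μ;q)_{m-j} / (ν;q)_m · (q;q)_m / ((q;q)_j (q;q)_{m-j}). -/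
/-!
The weights sum to one by the q-Chu–Vandermonde identity
`∑_{k+l=m} [k+l choose k]_q μ^k (ν/μ;q)_k (μ;q)_l = (ν;q)_m`, which holds over any commutative
ring once the Gaussian binomial is defined by the q-Pascal rule. It follows by induction on `m`:
for `k + l = m`, the splitting `1 - ν q^m = (1 - μ q^l) + q^l (μ - ν q^k)` turns the `m`-th sum
times `1 - ν q^m` into the two halves of the Pascal rule summed over `k + l = m + 1`.
-/

open Finset

namespace Finset.Nat

theorem sum_antidiagonal_succ_of_pascal {M : Type*} [AddCommMonoid M] {f g h : ℕ × ℕ → M}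
    (h_left : ∀ l, h (0, l + 1) = f (0, l)) (h_right : ∀ k, h (k + 1, 0) = g (k, 0))
    (h_succ : ∀ k l, h (k + 1, l + 1) = f (k + 1, l) + g (k, l + 1)) (m : ℕ) :
    ∑ p ∈ antidiagonal (m + 1), h p = ∑ p ∈ antidiagonal m, (f p + g p) := by
  let f' : ℕ × ℕ → M := fun | (_, 0) => 0 | (k, l + 1) => f (k, l)
  let g' : ℕ × ℕ → M := fun | (0, _) => 0 | (k + 1, l) => g (k, l)
  have hf : ∑ p ∈ antidiagonal m, f p = ∑ p ∈ antidiagonal (m + 1), f' p := by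
    simp [sum_antidiagonal_succ', f']
  have hg : ∑ p ∈ antidiagonal m, g p = ∑ p ∈ antidiagonal (m + 1), g' p := by
    simp [sum_antidiagonal_succ, g']
  rw [sum_add_distrib, hf, hg, ← sum_add_distrib]
  refine sum_congr rfl fun ⟨k, l⟩ hkl => ?_
  match k, l with
  | 0, 0 => simp at hkl
  | 0, l + 1 => simp [f', g', h_left]
  | k + 1, 0 => simp [f', g', h_right]
  | k + 1, l + 1 => exact h_succ k l

end Finset.Nat

section GaussBinom

variable {R : Type*} [CommRing R]

/-- `gaussBinom q k l` is the Gaussian binomial `[k + l choose k]_q`; indexing by `k` and `l`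
keeps the q-Pascal rule free of subtraction. -/
def gaussBinom (q : R) : ℕ → ℕ → R
  | 0, _ => 1
  | _ + 1, 0 => 1
  | k + 1, l + 1 => gaussBinom q (k + 1) l + q ^ (l + 1) * gaussBinom q k (l + 1)
termination_by k l => k + l

@[simp]
theorem gaussBinom_zero_left (q : R) (l : ℕ) : gaussBinom q 0 l = 1 := by
  rw [gaussBinom]

@[simp]
theorem gaussBinom_zero_right (q : R) (k : ℕ) : gaussBinom q k 0 = 1 := by
  cases k <;> rw [gaussBinom]

theorem gaussBinom_succ_succ (q : R) (k l : ℕ) :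
    gaussBinom q (k + 1) (l + 1) =
      gaussBinom q (k + 1) l + q ^ (l + 1) * gaussBinom q k (l + 1) := by
  rw [gaussBinom]

def qFactorial (q : R) (n : ℕ) : R := ∏ i ∈ range n, (1 - q ^ (i + 1))

theorem qFactorial_succ (q : R) (n : ℕ) :
    qFactorial q (n + 1) = qFactorial q n * (1 - q ^ (n + 1)) :=
  prod_range_succ _ n

theorem gaussBinom_mul_qFactorial_mul_qFactorial (q : R) (k l : ℕ) :
    gaussBinom q k l * qFactorial q k * qFactorial q l = qFactorial q (k + l) := by
  induction k, l using gaussBinom.induct with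
  | case1 l => simp [qFactorial]
  | case2 k => simp [qFactorial]
  | case3 k l ih_left ih_right =>
    rw [qFactorial_succ q k] at ih_left
    rw [qFactorial_succ q l, show k + (l + 1) = k + 1 + l by ring] at ih_right
    rw [gaussBinom_succ_succ, qFactorial_succ q k, qFactorial_succ q l,
      show k + 1 + (l + 1) = k + 1 + l + 1 by ring, qFactorial_succ]
    linear_combination (1 - q ^ (l + 1)) * ih_left + q ^ (l + 1) * (1 - q ^ (k + 1)) * ih_right

theorem q_chu_vandermonde (q μ ν : R) (m : ℕ) :
    ∑ p ∈ antidiagonal m, gaussBinom q p.1 p.2 * (∏ i ∈ range p.1, (μ - ν * q ^ i)) *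
        ∏ i ∈ range p.2, (1 - μ * q ^ i) =
      ∏ i ∈ range m, (1 - ν * q ^ i) := by
  induction m with
  | zero => simp
  | succ m ih =>
    rw [Nat.sum_antidiagonal_succ_of_pascal
      (f := fun p => gaussBinom q p.1 p.2 * (∏ i ∈ range p.1, (μ - ν * q ^ i)) *
        ∏ i ∈ range (p.2 + 1), (1 - μ * q ^ i))
      (g := fun p => q ^ p.2 * gaussBinom q p.1 p.2 * (∏ i ∈ range (p.1 + 1), (μ - ν * q ^ i)) *
        ∏ i ∈ range p.2, (1 - μ * q ^ i))
      (fun l => by simp) (fun k => by simp)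
      (fun k l => by rw [gaussBinom_succ_succ]; ring),
      prod_range_succ, ← ih, sum_mul]
    refine sum_congr rfl fun ⟨k, l⟩ hkl => ?_
    obtain rfl : k + l = m := by simpa using hkl
    simp only [prod_range_succ, pow_add]
    ring

end GaussBinom

theorem gaussBinom_eq_div {K : Type*} [Field K] {q : K} (hq : ∀ n, qFactorial q n ≠ 0)
    (k l : ℕ) : gaussBinom q k l = qFactorial q (k + l) / (qFactorial q k * qFactorial q l) := by
  rw [← gaussBinom_mul_qFactorial_mul_qFactorial, mul_assoc, mul_div_cancel_right₀]
  exact mul_ne_zero (hq k) (hq l)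

theorem qFactorial_pos {q : ℝ} (hq0 : 0 < q) (hq1 : q < 1) (n : ℕ) : 0 < qFactorial q n :=
  prod_pos fun i _ => sub_pos.mpr (pow_lt_one₀ hq0.le hq1 i.succ_ne_zero)

theorem stmt2_general (q μ ν : ℝ) (hq0 : 0 < q) (hq1 : q < 1)
    (hνμ : ν ≤ μ) (hμ : μ < 1) (m : ℕ) :
    ∑ j ∈ Finset.range (m + 1),
      ((∏ i ∈ Finset.range j, (μ - ν * q ^ i)) *
        (∏ i ∈ Finset.range (m - j), (1 - μ * q ^ i)) /
        (∏ i ∈ Finset.range m, (1 - ν * q ^ i))) *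
      ((∏ i ∈ Finset.range m, (1 - q ^ (i + 1))) /
        ((∏ i ∈ Finset.range j, (1 - q ^ (i + 1))) *
          (∏ i ∈ Finset.range (m - j), (1 - q ^ (i + 1)))))
      = 1 := by
  have hF : ∀ n, qFactorial q n ≠ 0 := fun n => (qFactorial_pos hq0 hq1 n).ne'
  have hN : ∏ i ∈ range m, (1 - ν * q ^ i) ≠ 0 := by
    refine prod_ne_zero_iff.mpr fun i _ => (sub_pos.mpr ?_).ne'
    rcases le_or_gt ν 0 with hν | hν
    · exact (mul_nonpos_of_nonpos_of_nonneg hν (pow_nonneg hq0.le i)).trans_lt one_pos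
    · exact (mul_le_of_le_one_right hν.le (pow_le_one₀ hq0.le hq1.le)).trans_lt (hνμ.trans_lt hμ)
  calc _ = (∑ j ∈ range (m + 1), gaussBinom q j (m - j) * (∏ i ∈ range j, (μ - ν * q ^ i)) *
          ∏ i ∈ range (m - j), (1 - μ * q ^ i)) / ∏ i ∈ range m, (1 - ν * q ^ i) := by
        rw [sum_div]
        refine sum_congr rfl fun j hj => ?_
        rw [gaussBinom_eq_div hF, Nat.add_sub_cancel' (Nat.le_of_lt_succ (mem_range.mp hj))]
        simp only [qFactorial]
        ring
    _ = 1 := by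
        rw [← Nat.sum_antidiagonal_eq_sum_range_succ (fun k l => gaussBinom q k l *
          (∏ i ∈ range k, (μ - ν * q ^ i)) * ∏ i ∈ range l, (1 - μ * q ^ i)),
          q_chu_vandermonde, div_self hN]

/-- The deformed binomial weights `φ_{q,μ,ν}(j | m)` sum to one, where
`μ^j (ν/μ;q)_j` is written as `∏_{i<j} (μ - ν q^i)`. -/
theorem stmt2 (q μ ν : ℝ) (hq0 : 0 < q) (hq1 : q < 1)
    (hν : 0 ≤ ν) (hνμ : ν ≤ μ) (hμ : μ < 1) (m : ℕ) :
    ∑ j ∈ Finset.range (m + 1),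
      ((∏ i ∈ Finset.range j, (μ - ν * q ^ i)) *
        (∏ i ∈ Finset.range (m - j), (1 - μ * q ^ i)) /
        (∏ i ∈ Finset.range m, (1 - ν * q ^ i))) *
      ((∏ i ∈ Finset.range m, (1 - q ^ (i + 1))) /
        ((∏ i ∈ Finset.range j, (1 - q ^ (i + 1))) *
          (∏ i ∈ Finset.range (m - j), (1 - q ^ (i + 1)))))
      = 1 :=
  stmt2_general q μ ν hq0 hq1 hνμ hμ m
end

section
/- The reflection operator intertwines left and right q-Hahn eigenfunctions: for all n ∈ W^k (n_1 ≥ … ≥ n_k, integers) and z ∈ (ℂ∖{1,ν⁻¹})^k, one has Ψ^ℓ_z(-n_k,…,-n_1) = (-1)^k (1-q)^{-k} m(n)^{-1} Ψ^r_z(n_1,…,n_k), where m(n) = ∏_{j=1}^{M(n)} (ν;q)_{c_j}/(q;q)_{c_j} and c_1,…,c_{M(n)} are the cluster sizes of n. -/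
/-! Reindexing the sum defining `Ψ^ℓ` by `σ ↦ σ ∘ rev` reverses the coordinates back, and turns
each cross factor `(z_a - q z_b)/(z_a - z_b)` into `q` times the corresponding `q⁻¹`-factor of `Ψ^r`.
The `k(k-1)/2` powers of `q` collected this way are exactly the prefactor `q^{k(k-1)/2}` of `Ψ^r`;
the remaining constants `(-1)^k (1-q)^k m(n)` cancel. -/

open Finset

/-- Left q-Hahn eigenfunction. -/
noncomputable def PsiL (k : ℕ) (q ν : ℝ) (z : Fin k → ℂ) (n : Fin k → ℤ) : ℂ :=
  ∑ σ : Equiv.Perm (Fin k),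
    (∏ p ∈ Finset.univ.filter (fun p : Fin k × Fin k => p.1 < p.2),
      (z (σ p.2) - (q : ℂ) * z (σ p.1)) / (z (σ p.2) - z (σ p.1))) *
    ∏ j : Fin k, ((1 - z (σ j)) / (1 - (ν : ℂ) * z (σ j))) ^ (-(n j))

/-- For `i` in the `r`-th position (counting from `0`) of its cluster of equal
coordinates of `n`, `clusterIdx k n i = r`. -/
def clusterIdx (k : ℕ) (n : Fin k → ℤ) (i : Fin k) : ℕ :=
  (Finset.univ.filter (fun j : Fin k => j < i ∧ n j = n i)).card

/-- The constant `m(n) = ∏_{j=1}^{M(n)} (ν;q)_{c_j}/(q;q)_{c_j}` written as a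
product over positions. -/
noncomputable def mConst (k : ℕ) (q ν : ℝ) (n : Fin k → ℤ) : ℝ :=
  ∏ i : Fin k, (1 - ν * q ^ clusterIdx k n i) / (1 - q ^ (clusterIdx k n i + 1))

/-- Right q-Hahn eigenfunction. -/
noncomputable def PsiR (k : ℕ) (q ν : ℝ) (z : Fin k → ℂ) (n : Fin k → ℤ) : ℂ :=
  (-1) ^ k * (1 - (q : ℂ)) ^ k * (q : ℂ) ^ (k * (k - 1) / 2) * (mConst k q ν n : ℂ) *
  ∑ σ : Equiv.Perm (Fin k),
    (∏ p ∈ Finset.univ.filter (fun p : Fin k × Fin k => p.1 < p.2),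
      (z (σ p.2) - (q : ℂ)⁻¹ * z (σ p.1)) / (z (σ p.2) - z (σ p.1))) *
    ∏ j : Fin k, ((1 - z (σ j)) / (1 - (ν : ℂ) * z (σ j))) ^ (n j)

open Equiv

section PairProducts

variable {k : ℕ}

lemma prod_filter_fst_lt_snd_rev {M : Type*} [CommMonoid M] (f : Fin k → Fin k → M) :
    ∏ p ∈ univ.filter (fun p : Fin k × Fin k => p.1 < p.2), f p.2.rev p.1.rev
      = ∏ p ∈ univ.filter (fun p : Fin k × Fin k => p.1 < p.2), f p.1 p.2 := by
  refine prod_nbij' (fun p => (p.2.rev, p.1.rev)) (fun p => (p.2.rev, p.1.rev)) ?_ ?_ ?_ ?_ ?_ <;>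
    simp

lemma div_sub_mul_eq_mul_div_sub_inv_mul {K : Type*} [Field K] {q a b : K} (hq : q ≠ 0)
    (hab : a ≠ b) : (a - q * b) / (a - b) = q * ((b - q⁻¹ * a) / (b - a)) := by
  have hab' : b - a ≠ 0 := sub_ne_zero.mpr hab.symm
  field_simp
  ring

lemma prod_pairs_rev_eq_pow_mul {K : Type*} [Field K] {q : K} (hq : q ≠ 0) {w : Fin k → K}
    (hw : Function.Injective w) :
    ∏ p ∈ univ.filter (fun p : Fin k × Fin k => p.1 < p.2),
        (w p.2.rev - q * w p.1.rev) / (w p.2.rev - w p.1.rev)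
      = q ^ (k * (k - 1) / 2) * ∏ p ∈ univ.filter (fun p : Fin k × Fin k => p.1 < p.2),
        (w p.2 - q⁻¹ * w p.1) / (w p.2 - w p.1) := by
  have hcard : k * (k - 1) / 2 = #(univ.filter fun p : Fin k × Fin k => p.1 < p.2) := by
    rw [Fintype.card_product_filter_lt, Fintype.card_fin, Nat.choose_two_right]
  rw [prod_filter_fst_lt_snd_rev (fun i j => (w i - q * w j) / (w i - w j)), hcard,
    ← prod_const, ← prod_mul_distrib]
  refine prod_congr rfl fun p hp => div_sub_mul_eq_mul_div_sub_inv_mul hq (hw.ne ?_)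
  exact (mem_filter.mp hp).2.ne

end PairProducts

lemma PsiR_eq_mul_PsiL_reflect (k : ℕ) (q ν : ℝ) (hq : q ≠ 0) (n : Fin k → ℤ) (z : Fin k → ℂ)
    (hz : Function.Injective z) :
    PsiR k q ν z n = (-1) ^ k * (1 - (q : ℂ)) ^ k * (mConst k q ν n : ℂ) *
      PsiL k q ν z (fun i => -(n i.rev)) := by
  have hqC : (q : ℂ) ≠ 0 := Complex.ofReal_ne_zero.mpr hq
  rw [PsiR, PsiL, mul_sum, mul_sum]
  conv_rhs => rw [← Equiv.sum_comp (Equiv.mulRight Fin.revPerm)]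
  refine sum_congr rfl fun σ _ => ?_
  have hpairs := prod_pairs_rev_eq_pow_mul hqC (hz.comp σ.injective)
  simp only [Function.comp_apply] at hpairs
  simp only [Equiv.coe_mulRight, Perm.mul_apply, Fin.revPerm_apply, neg_neg, hpairs]
  rw [Fintype.prod_equiv Fin.revPerm (fun j => ((1 - z (σ j.rev)) / (1 - ν * z (σ j.rev))) ^ n j.rev)
      (fun j => ((1 - z (σ j)) / (1 - ν * z (σ j))) ^ n j) fun j => rfl]
  ring

lemma mConst_ne_zero (k : ℕ) {q ν : ℝ} (hq0 : 0 < q) (hq1 : q < 1) (hν1 : ν < 1)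
    (n : Fin k → ℤ) : mConst k q ν n ≠ 0 := by
  refine prod_ne_zero_iff.mpr fun i _ => div_ne_zero ?_ ?_
  · have hp0 : 0 < q ^ clusterIdx k n i := pow_pos hq0 _
    have hp1 : q ^ clusterIdx k n i ≤ 1 := pow_le_one₀ hq0.le hq1.le
    nlinarith
  · exact (sub_pos.mpr (pow_lt_one₀ hq0.le hq1 (Nat.succ_ne_zero _))).ne'

theorem stmt4_general (k : ℕ) (q ν : ℝ) (hq0 : 0 < q) (hq1 : q < 1) (hν1 : ν < 1) (n : Fin k → ℤ)
    (z : Fin k → ℂ) (hz : Function.Injective z) :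
    PsiL k q ν z (fun i => -(n i.rev))
      = (-1) ^ k * ((1 - (q : ℂ)) ^ k)⁻¹ * ((mConst k q ν n : ℂ))⁻¹ *
        PsiR k q ν z n := by
  have h1q : (1 - (q : ℂ)) ^ k ≠ 0 :=
    pow_ne_zero _ (sub_ne_zero.mpr (by exact_mod_cast hq1.ne'))
  have hm : (mConst k q ν n : ℂ) ≠ 0 :=
    Complex.ofReal_ne_zero.mpr (mConst_ne_zero k hq0 hq1 hν1 n)
  have hsign : (-1 : ℂ) ^ k * (-1) ^ k = 1 := by rw [← mul_pow]; norm_num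
  rw [PsiR_eq_mul_PsiL_reflect k q ν hq0.ne' n z hz]
  field_simp
  linear_combination (-PsiL k q ν z (fun i => -(n i.rev))) * hsign

/-- The reflection operator intertwines left and right q-Hahn eigenfunctions:
`Ψ^ℓ_z(-n_k,…,-n_1) = (-1)^k (1-q)^{-k} m(n)^{-1} Ψ^r_z(n)`. -/
theorem stmt4 (k : ℕ) (q ν : ℝ) (hq0 : 0 < q) (hq1 : q < 1)
    (hν0 : 0 ≤ ν) (hν1 : ν < 1)
    (n : Fin k → ℤ) (hn : ∀ i j : Fin k, i ≤ j → n j ≤ n i)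
    (z : Fin k → ℂ) (hz : Function.Injective z)
    (hz1 : ∀ j, z j ≠ 1) (hzν : ∀ j, (ν : ℂ) * z j ≠ 1) :
    PsiL k q ν z (fun i => -(n i.rev))
      = (-1) ^ k * ((1 - (q : ℂ)) ^ k)⁻¹ * ((mConst k q ν n : ℂ))⁻¹ *
        PsiR k q ν z n :=
  stmt4_general k q ν hq0 hq1 hν1 n z hz
end

section
/- The Tracy–Widom symmetrization identity: for 0 < τ < 1 and complex ξ_1,…,ξ_k with |ξ_j| < 1 and pairwise distinct, ∑_{σ ∈ S(k)} ∏_{i<j} S_ASEP(ξ_{σ(i)}, ξ_{σ(j)})/(ξ_{σ(j)} - ξ_{σ(i)}) · ξ_{σ(2)} ξ_{σ(3)}² ⋯ ξ_{σ(k)}^{k-1} / [(1 - ξ_{σ(1)}⋯ξ_{σ(k)})(1 - ξ_{σ(2)}⋯ξ_{σ(k)})⋯(1 - ξ_{σ(k)})] = τ^{k(k-1)/2} / ∏_{j=1}^k (1 - ξ_j). -/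
open Finset

/-- The ASEP cross-term `S_ASEP(ξ₁,ξ₂) = τ - (1+τ)ξ₁ + ξ₁ξ₂`. -/
noncomputable def SASEP (τ : ℝ) (x y : ℂ) : ℂ := (τ : ℂ) - (1 + (τ : ℂ)) * x + x * y

/-!
Induct on `k`, splitting off `p = σ(1)`: the summand of `σ` is a first-row factor, which depends
only on `ξ_p` and the set of the other `ξ_i`, times the summand of the remaining `k - 1` variables.
The induction hypothesis then reduces the claim to
`∑_p (1 - ξ_p) ∏_{i ≠ p} ξ_i S(ξ_p, ξ_i) / (ξ_i - ξ_p) = τ^(k-1) (1 - ξ_1 ⋯ ξ_k)`.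
Both sides are polynomials in `τ`, so it suffices to take `τ ∉ {0, ξ_1, …, ξ_k}` (and all `ξ_i ≠ 0`;
otherwise only one term survives). Then `N(z) = ∏_i ξ_i S(z, ξ_i)` has degree `k`, so the Lagrange
sum `∑_x N(x) / ∏_{y ≠ x} (x - y)` over the `k + 2` nodes `0, τ, ξ_1, …, ξ_k` vanishes; the node
`ξ_p` contributes the `p`-th term and the nodes `0` and `τ` the right-hand side.
-/

theorem Fin.sum_perm_comp {α M : Type*} [AddCommMonoid M] {n : ℕ} (ξ : Fin (n + 1) → α)
    (f : (Fin (n + 1) → α) → M) :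
    ∑ σ : Equiv.Perm (Fin (n + 1)), f (ξ ∘ σ) =
      ∑ p, ∑ e : Equiv.Perm (Fin n),
        f (Fin.cons (ξ p) fun j => ξ (Equiv.swap 0 p (e j).succ)) := by
  rw [← Equiv.Perm.decomposeFin.symm.sum_comp, Fintype.sum_prod_type]
  refine sum_congr rfl fun p _ => sum_congr rfl fun e _ => congrArg f ?_
  ext j
  refine Fin.cases ?_ (fun j => ?_) j <;> simp

theorem Fin.prod_univ_erase_eq_prod_swap_succ {M : Type*} [CommMonoid M] {n : ℕ}
    (p : Fin (n + 1)) (f : Fin (n + 1) → M) :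
    ∏ i ∈ univ.erase p, f i = ∏ j : Fin n, f (Equiv.swap 0 p j.succ) := by
  calc ∏ i ∈ univ.erase p, f i
        = ∏ i ∈ (univ.erase 0).map (Equiv.swap 0 p).toEmbedding, f i := by
        rw [map_erase, map_univ_equiv, Equiv.coe_toEmbedding, Equiv.swap_apply_left]
    _ = ∏ j : Fin n, f (Equiv.swap 0 p j.succ) := by
        rw [prod_map, Fin.univ_succ, erase_cons, prod_map]
        rfl

theorem Fin.prod_filter_lt_succ_s5 {M : Type*} [CommMonoid M] {n : ℕ}
    (g : Fin (n + 1) → Fin (n + 1) → M) :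
    ∏ p ∈ univ.filter (fun p : Fin (n + 1) × Fin (n + 1) => p.1 < p.2), g p.1 p.2 =
      (∏ j : Fin n, g 0 j.succ) *
        ∏ q ∈ univ.filter (fun q : Fin n × Fin n => q.1 < q.2), g q.1.succ q.2.succ := by
  simp only [prod_filter, Fintype.prod_prod_type, Fin.prod_univ_succ, Fin.succ_pos,
    Fin.succ_lt_succ_iff, Fin.not_lt_zero, if_true, if_false, one_mul]

theorem Fin.prod_filter_succ_le {M : Type*} [CommMonoid M] {n : ℕ} (m : Fin n)
    (f : Fin (n + 1) → M) :
    ∏ l ∈ univ.filter (fun l : Fin (n + 1) => m.succ ≤ l), f l =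
      ∏ l ∈ univ.filter (fun l : Fin n => m ≤ l), f l.succ := by
  simp [prod_filter, Fin.prod_univ_succ, Fin.succ_le_succ_iff]

theorem norm_prod_lt_one {ι 𝕜 : Type*} [NormedField 𝕜] {s : Finset ι} {f : ι → 𝕜}
    (hs : s.Nonempty) (hf : ∀ i ∈ s, ‖f i‖ < 1) : ‖∏ i ∈ s, f i‖ < 1 := by
  classical
  obtain ⟨a, ha⟩ := hs
  rw [← mul_prod_erase s f ha, norm_mul, norm_prod]
  calc ‖f a‖ * ∏ i ∈ s.erase a, ‖f i‖ ≤ ‖f a‖ * 1 := by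
        gcongr
        exact prod_le_one (fun _ _ => norm_nonneg _) fun i hi => (hf i (mem_of_mem_erase hi)).le
    _ < 1 := by simpa using hf a ha

namespace TracyWidom

open Polynomial

variable {F : Type*} [Field F]

def asepS (t x y : F) : F := t - (1 + t) * x + x * y

noncomputable def asepPoly {n : ℕ} (t : F) (ξ : Fin n → F) : F[X] :=
  ∏ i, C (ξ i) * (C t - (1 + C t) * X + X * C (ξ i))

theorem eval_asepPoly {n : ℕ} (t z : F) (ξ : Fin n → F) :
    (asepPoly t ξ).eval z = ∏ i, ξ i * asepS t z (ξ i) := by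
  simp only [asepPoly, asepS, eval_prod, eval_mul, eval_C, eval_sub, eval_add, eval_one, eval_X]

theorem natDegree_asepPoly_le {n : ℕ} (t : F) (ξ : Fin n → F) :
    (asepPoly t ξ).natDegree ≤ n := by
  refine (natDegree_prod_le _ _).trans ((sum_le_sum fun i _ => (?_ : _ ≤ 1)).trans (by simp))
  compute_degree

theorem eval_asepPoly_zero_div {n : ℕ} {t : F} {ξ : Fin (n + 1) → F} (hξ0 : ∀ i, ξ i ≠ 0)
    (ht0 : t ≠ 0) :
    (asepPoly t ξ).eval 0 / ((0 - t) * ∏ i, (0 - ξ i)) = (-t) ^ n := by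
  rw [eval_asepPoly, div_mul_eq_div_div_swap, ← prod_div_distrib,
    prod_congr rfl fun i _ => (by rw [asepS]; field_simp [hξ0 i]; ring :
      ξ i * asepS t 0 (ξ i) / (0 - ξ i) = -t),
    prod_const, card_univ, Fintype.card_fin, pow_succ]
  field_simp
  ring

theorem eval_asepPoly_self_div {n : ℕ} {t : F} {ξ : Fin (n + 1) → F} (ht0 : t ≠ 0)
    (hξt : ∀ i, ξ i ≠ t) :
    (asepPoly t ξ).eval t / ((t - 0) * ∏ i, (t - ξ i)) = -((-t) ^ n * ∏ i, ξ i) := by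
  rw [eval_asepPoly, div_mul_eq_div_div_swap, ← prod_div_distrib,
    prod_congr rfl fun i _ => (by rw [asepS]; field_simp [sub_ne_zero.2 (hξt i).symm]; ring :
      ξ i * asepS t t (ξ i) / (t - ξ i) = -t * ξ i),
    prod_mul_distrib, prod_const, card_univ, Fintype.card_fin, pow_succ]
  field_simp
  ring

theorem eval_asepPoly_node_div {n : ℕ} {t : F} {ξ : Fin (n + 1) → F} (hξ0 : ∀ i, ξ i ≠ 0)
    (hξt : ∀ i, ξ i ≠ t) (p : Fin (n + 1)) :
    (asepPoly t ξ).eval (ξ p) / ((ξ p - 0) * ((ξ p - t) * ∏ i ∈ univ.erase p, (ξ p - ξ i))) =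
      -((-1) ^ n * ((1 - ξ p) * ∏ i ∈ univ.erase p, ξ i * asepS t (ξ p) (ξ i) / (ξ i - ξ p))) := by
  have hdiag : ξ p * asepS t (ξ p) (ξ p) / ((ξ p - 0) * (ξ p - t)) = -(1 - ξ p) := by
    rw [asepS]
    field_simp [hξ0 p, sub_ne_zero.2 (hξt p)]
    ring
  rw [eval_asepPoly, ← mul_prod_erase _ _ (mem_univ p), ← mul_assoc, mul_div_mul_comm, hdiag,
    ← prod_div_distrib, prod_congr rfl fun i _ => (by rw [← neg_sub, div_neg] :
      ξ i * asepS t (ξ p) (ξ i) / (ξ p - ξ i) = -(ξ i * asepS t (ξ p) (ξ i) / (ξ i - ξ p))),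
    prod_neg, card_erase_of_mem (mem_univ p), card_univ, Fintype.card_fin, Nat.add_sub_cancel]
  ring

theorem sum_one_sub_mul_prod_erase_of_ne {n : ℕ} {t : F} {ξ : Fin (n + 1) → F}
    (hξ : Function.Injective ξ) (hξ0 : ∀ i, ξ i ≠ 0) (ht0 : t ≠ 0) (hξt : ∀ i, ξ i ≠ t) :
    ∑ p, (1 - ξ p) * ∏ i ∈ univ.erase p, ξ i * asepS t (ξ p) (ξ i) / (ξ i - ξ p) =
      t ^ n * (1 - ∏ i, ξ i) := by
  classical
  have h0 : (0 : F) ∉ insert t (univ.image ξ) := by simpa [eq_comm] using ⟨ht0, hξ0⟩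
  have ht : t ∉ univ.image ξ := by simpa using hξt
  have h0' : (0 : F) ∉ univ.image ξ := fun h => h0 (mem_insert_of_mem h)
  have h0p (p) : (0 : F) ∉ insert t ((univ.erase p).image ξ) :=
    fun h => h0 (insert_subset_insert _ (image_subset_image (erase_subset _ _)) h)
  have htp (p) : t ∉ (univ.erase p).image ξ :=
    fun h => ht (image_subset_image (erase_subset _ _) h)
  set s : Finset F := insert 0 (insert t (univ.image ξ))
  have hcard : #s = n + 3 := by
    rw [card_insert_of_notMem h0, card_insert_of_notMem ht, card_image_of_injective _ hξ]
    simp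
  have hdeg : (asepPoly t ξ).natDegree < #s - 1 := by
    rw [hcard]; exact (natDegree_asepPoly_le t ξ).trans_lt (by omega)
  have hL := Lagrange.coeff_eq_sum (Set.injOn_id (s : Set F)) (P := asepPoly t ξ)
    (degree_le_natDegree.trans_lt (by exact_mod_cast hdeg.trans_le (Nat.sub_le _ _)))
  have hden0 : ∏ y ∈ s.erase 0, (0 - y) = (0 - t) * ∏ i, (0 - ξ i) := by
    rw [erase_insert h0, prod_insert ht, prod_image fun _ _ _ _ h => hξ h]
  have hdent : ∏ y ∈ s.erase t, (t - y) = (t - 0) * ∏ i, (t - ξ i) := by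
    rw [erase_insert_of_ne (Ne.symm ht0), erase_insert ht, prod_insert h0',
      prod_image fun _ _ _ _ h => hξ h]
  have hdenp (p) : ∏ y ∈ s.erase (ξ p), (ξ p - y) =
      (ξ p - 0) * ((ξ p - t) * ∏ i ∈ univ.erase p, (ξ p - ξ i)) := by
    rw [erase_insert_of_ne (hξ0 p).symm, erase_insert_of_ne (hξt p).symm, ← image_erase hξ,
      prod_insert (h0p p), prod_insert (htp p), prod_image fun _ _ _ _ h => hξ h]
  rw [coeff_eq_zero_of_natDegree_lt hdeg, sum_insert h0, sum_insert ht,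
    sum_image fun _ _ _ _ h => hξ h] at hL
  simp only [id, hden0, hdent, hdenp, eval_asepPoly_zero_div hξ0 ht0,
    eval_asepPoly_self_div ht0 hξt, eval_asepPoly_node_div hξ0 hξt, sum_neg_distrib,
    ← mul_sum] at hL
  have hsign : ((-1 : F) ^ n) * (-1) ^ n = 1 := by rw [← mul_pow]; simp
  linear_combination (-1) ^ n * hL -
    (∑ p, (1 - ξ p) * ∏ i ∈ univ.erase p, ξ i * asepS t (ξ p) (ξ i) / (ξ i - ξ p) -
      t ^ n * (1 - ∏ i, ξ i)) * hsign

theorem sum_one_sub_mul_prod_erase [Infinite F] {n : ℕ} (t : F) {ξ : Fin (n + 1) → F}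
    (hξ : Function.Injective ξ) :
    ∑ p, (1 - ξ p) * ∏ i ∈ univ.erase p, ξ i * asepS t (ξ p) (ξ i) / (ξ i - ξ p) =
      t ^ n * (1 - ∏ i, ξ i) := by
  by_cases hz : ∃ j, ξ j = 0
  · obtain ⟨j, hj⟩ := hz
    have hrest (p) (hp : p ≠ j) :
        ∏ i ∈ univ.erase p, ξ i * asepS t (ξ p) (ξ i) / (ξ i - ξ p) = 0 :=
      prod_eq_zero (mem_erase.2 ⟨hp.symm, mem_univ j⟩) (by simp [hj])
    have hfactor (i) (hi : i ∈ univ.erase j) : ξ i * asepS t (ξ j) (ξ i) / (ξ i - ξ j) = t := by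
      have hi0 : ξ i ≠ 0 := fun h => (mem_erase.1 hi).1 (hξ (h.trans hj.symm))
      rw [hj, asepS]
      field_simp
      ring
    rw [sum_eq_single j (fun p _ hp => by rw [hrest p hp, mul_zero]) (by simp),
      prod_congr rfl hfactor, prod_eq_zero (mem_univ j) hj, hj]
    simp
  simp only [not_exists] at hz
  set P : F[X] := ∑ p, C (1 - ξ p) * ∏ i ∈ univ.erase p,
    C (ξ i / (ξ i - ξ p)) * (X - (1 + X) * C (ξ p) + C (ξ p * ξ i))
  set Q : F[X] := C (1 - ∏ i, ξ i) * X ^ n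
  have hP (z : F) : P.eval z =
      ∑ p, (1 - ξ p) * ∏ i ∈ univ.erase p, ξ i * asepS z (ξ p) (ξ i) / (ξ i - ξ p) := by
    simp only [P, eval_finsetSum, eval_mul, eval_C, eval_prod, eval_add, eval_sub, eval_X,
      eval_one, asepS, div_mul_eq_mul_div]
  have hQ (z : F) : Q.eval z = z ^ n * (1 - ∏ i, ξ i) := by simp [Q, eval_prod, mul_comm]
  have hPQ : P = Q := by
    refine eq_of_infinite_eval_eq P Q (((Set.finite_range ξ).insert 0).infinite_compl.mono ?_)
    intro z hz'
    simp only [Set.mem_compl_iff, Set.mem_insert_iff, Set.mem_range, not_or, not_exists] at hz'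
    show P.eval z = Q.eval z
    rw [hP, hQ]
    exact sum_one_sub_mul_prod_erase_of_ne hξ hz hz'.1 hz'.2
  rw [← hP, hPQ, hQ]

def summand {k : ℕ} (t : F) (η : Fin k → F) : F :=
  (∏ p ∈ univ.filter (fun p : Fin k × Fin k => p.1 < p.2),
      asepS t (η p.1) (η p.2) / (η p.2 - η p.1)) *
    (∏ m : Fin k, η m ^ (m : ℕ)) /
    ∏ m : Fin k, (1 - ∏ l ∈ univ.filter (fun l : Fin k => m ≤ l), η l)

theorem summand_cons {n : ℕ} (t x : F) (ζ : Fin n → F) :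
    summand t (Fin.cons x ζ : Fin (n + 1) → F) =
      (∏ j, ζ j * asepS t x (ζ j) / (ζ j - x)) / (1 - x * ∏ j, ζ j) * summand t ζ := by
  set η : Fin (n + 1) → F := Fin.cons x ζ with hη
  rw [summand, summand, Fin.prod_filter_lt_succ_s5 fun a b => asepS t (η a) (η b) / (η b - η a),
    Fin.prod_univ_succ, Fin.prod_univ_succ]
  simp only [hη, Fin.prod_filter_succ_le, filter_true_of_mem fun l _ => Fin.zero_le l,
    Fin.prod_univ_succ, Fin.cons_zero, Fin.cons_succ, Fin.val_zero, Fin.val_succ, pow_zero,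
    pow_succ, prod_mul_distrib, div_eq_mul_inv, mul_inv]
  ring

theorem sum_perm_summand [Infinite F] (t : F) {k : ℕ} (ξ : Fin k → F) (hξ : Function.Injective ξ)
    (hprod : ∀ A : Finset (Fin k), A.Nonempty → ∏ i ∈ A, ξ i ≠ 1) :
    ∑ σ : Equiv.Perm (Fin k), summand t (ξ ∘ σ) = t ^ (k * (k - 1) / 2) / ∏ j, (1 - ξ j) := by
  induction k with
  | zero => simp [summand]
  | succ n ih =>
    set ξ' : Fin (n + 1) → Fin n → F := fun p j => ξ (Equiv.swap 0 p j.succ)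
    have hshift (p : Fin (n + 1)) : Function.Injective fun j : Fin n => Equiv.swap 0 p j.succ :=
      (Equiv.injective _).comp (Fin.succ_injective n)
    have hreindex (p : Fin (n + 1)) (f : F → F) :
        ∏ j, f (ξ' p j) = ∏ i ∈ univ.erase p, f (ξ i) :=
      (Fin.prod_univ_erase_eq_prod_swap_succ p (f ∘ ξ)).symm
    have hinner (p : Fin (n + 1)) :
        ∑ e : Equiv.Perm (Fin n), summand t (ξ' p ∘ e) =
          t ^ (n * (n - 1) / 2) / ∏ j, (1 - ξ' p j) :=
      ih (ξ' p) (hξ.comp (hshift p)) fun A hA => by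
        simpa [prod_map] using hprod (A.map ⟨_, hshift p⟩) (hA.map)
    have hone_sub (p : Fin (n + 1)) : 1 - ξ p ≠ 0 :=
      sub_ne_zero.2 (by simpa using (hprod {p} (singleton_nonempty p)).symm)
    have hall : 1 - ∏ i, ξ i ≠ 0 := sub_ne_zero.2 (hprod univ univ_nonempty).symm
    calc ∑ σ : Equiv.Perm (Fin (n + 1)), summand t (ξ ∘ σ)
        = ∑ p, ∑ e : Equiv.Perm (Fin n), summand t (Fin.cons (ξ p) (ξ' p ∘ e) : Fin (n + 1) → F) :=
          Fin.sum_perm_comp ξ (summand t)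
      _ = ∑ p, (∏ i ∈ univ.erase p, ξ i * asepS t (ξ p) (ξ i) / (ξ i - ξ p)) / (1 - ∏ i, ξ i) *
            (t ^ (n * (n - 1) / 2) / ∏ i ∈ univ.erase p, (1 - ξ i)) := by
          refine sum_congr rfl fun p _ => ?_
          simp only [summand_cons, ← mul_sum, hinner, Function.comp_apply,
            Equiv.prod_comp _ (fun j => ξ' p j * asepS t (ξ p) (ξ' p j) / (ξ' p j - ξ p)),
            Equiv.prod_comp _ (fun j => ξ' p j)]
          rw [hreindex p fun y => y * asepS t (ξ p) y / (y - ξ p), hreindex p fun y => y,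
            hreindex p fun y => 1 - y, mul_prod_erase _ _ (mem_univ p)]
      _ = t ^ (n * (n - 1) / 2) / ((1 - ∏ i, ξ i) * ∏ i, (1 - ξ i)) *
            ∑ p, (1 - ξ p) * ∏ i ∈ univ.erase p, ξ i * asepS t (ξ p) (ξ i) / (ξ i - ξ p) := by
          rw [mul_sum]
          refine sum_congr rfl fun p _ => ?_
          rw [← mul_prod_erase univ (fun i => 1 - ξ i) (mem_univ p)]
          field_simp [hone_sub p]
      _ = t ^ ((n + 1) * (n + 1 - 1) / 2) / ∏ j, (1 - ξ j) := by
          rw [sum_one_sub_mul_prod_erase t hξ, Nat.triangle_succ, pow_add]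
          field_simp

end TracyWidom

theorem stmt5_general (k : ℕ) (τ : ℝ)
    (ξ : Fin k → ℂ) (hξ : ∀ j, ‖ξ j‖ < 1) (hinj : Function.Injective ξ) :
    ∑ σ : Equiv.Perm (Fin k),
      (∏ p ∈ Finset.univ.filter (fun p : Fin k × Fin k => p.1 < p.2),
        SASEP τ (ξ (σ p.1)) (ξ (σ p.2)) / (ξ (σ p.2) - ξ (σ p.1))) *
      (∏ m : Fin k, ξ (σ m) ^ (m : ℕ)) /
      (∏ m : Fin k,
        (1 - ∏ l ∈ Finset.univ.filter (fun l : Fin k => m ≤ l), ξ (σ l)))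
    = (τ : ℂ) ^ (k * (k - 1) / 2) / ∏ j : Fin k, (1 - ξ j) :=
  TracyWidom.sum_perm_summand (τ : ℂ) ξ hinj fun A hA h =>
    (norm_prod_lt_one hA fun i _ => hξ i).ne (by simp [h])

/-- Tracy–Widom symmetrization identity (step initial data). -/
theorem stmt5 (k : ℕ) (hk : 1 ≤ k) (τ : ℝ) (hτ0 : 0 < τ) (hτ1 : τ < 1)
    (ξ : Fin k → ℂ) (hξ : ∀ j, ‖ξ j‖ < 1) (hinj : Function.Injective ξ)
    (hprod : ∀ (σ : Equiv.Perm (Fin k)) (m : Fin k),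
      (∏ l ∈ Finset.univ.filter (fun l : Fin k => m ≤ l), ξ (σ l)) ≠ 1) :
    ∑ σ : Equiv.Perm (Fin k),
      (∏ p ∈ Finset.univ.filter (fun p : Fin k × Fin k => p.1 < p.2),
        SASEP τ (ξ (σ p.1)) (ξ (σ p.2)) / (ξ (σ p.2) - ξ (σ p.1))) *
      (∏ m : Fin k, ξ (σ m) ^ (m : ℕ)) /
      (∏ m : Fin k,
        (1 - ∏ l ∈ Finset.univ.filter (fun l : Fin k => m ≤ l), ξ (σ l)))
    = (τ : ℂ) ^ (k * (k - 1) / 2) / ∏ j : Fin k, (1 - ξ j) :=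
  stmt5_general k τ ξ hξ hinj
end

section
/- The dual Tracy–Widom symmetrization identity: for 0 < τ < 1 and pairwise distinct ξ_1,…,ξ_k with |ξ_j| < 1, ∑_{σ ∈ S(k)} ∏_{B<A} S_ASEP(ξ_{σ(B)}, ξ_{σ(A)})/(ξ_{σ(A)} - ξ_{σ(B)}) · 1/[(1 - ξ_{σ(1)})(1 - ξ_{σ(1)}ξ_{σ(2)})⋯(1 - ξ_{σ(1)}⋯ξ_{σ(k)})] = ∏_{j=1}^k 1/(1 - ξ_j). -/
/-!
Induct on `k`, splitting a permutation according to its last value `v = σ(k)`. The factors of the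
summand involving the last position are `∏_{w ≠ v} S(ξ_w, ξ_v) / (ξ_v - ξ_w)` and
`1 / (1 - ξ_1 ⋯ ξ_k)`; what remains is the summand for the other `k - 1` variables. The induction
hypothesis thus reduces the theorem to
  `∑_v (1 - ξ_v) ∏_{w ≠ v} S(ξ_w, ξ_v) / (ξ_v - ξ_w) = 1 - ξ_1 ⋯ ξ_k`.
Since `S(x, τ) = τ - x`, the polynomial `∏_w (z - ξ_w) - ∏_w S(ξ_w, z)` vanishes at `z = τ`; its
quotient `F` by `z - τ` has degree `< k`, coefficient `1 - ∏_w ξ_w` at `z^(k-1)`, and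
`F(ξ_v) = (1 - ξ_v) ∏_{w ≠ v} S(ξ_w, ξ_v)`. Lagrange interpolation at the nodes `ξ_v` writes that
coefficient as the left-hand side.
-/

open Finset

open Polynomial Lagrange

namespace Polynomial

variable {R : Type*} [CommRing R]

lemma isRoot_of_X_sub_C_mul_eq_X_sub_C_mul [IsDomain R] {p q : R[X]} {a b : R}
    (h : (X - C a) * p = (X - C b) * q) (hq : q.IsRoot a) : p.IsRoot b := by
  obtain ⟨r, rfl⟩ := dvd_iff_isRoot.mpr hq
  have hp : p = (X - C b) * r :=
    mul_left_cancel₀ (X_sub_C_ne_zero a) (by rw [h]; ring)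
  simp [hp]

lemma natDegree_le_of_natDegree_X_sub_C_mul_le [Nontrivial R] {p : R[X]} {a : R} {n : ℕ}
    (h : ((X - C a) * p).natDegree ≤ n + 1) : p.natDegree ≤ n := by
  rcases eq_or_ne p 0 with rfl | hp
  · simp
  · rw [(monic_X_sub_C a).natDegree_mul' hp, natDegree_X_sub_C] at h
    omega

lemma coeff_X_sub_C_mul_of_natDegree_le {p : R[X]} {a : R} {n : ℕ} (h : p.natDegree ≤ n) :
    ((X - C a) * p).coeff (n + 1) = p.coeff n := by
  rw [coeff_X_sub_C_mul, coeff_eq_zero_of_natDegree_lt (Nat.lt_succ_of_le h), mul_zero, sub_zero]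

end Polynomial

noncomputable def sasepPoly (τ : ℝ) (x : ℂ) : ℂ[X] := C (τ : ℂ) - (1 + C (τ : ℂ)) * C x + C x * X

@[simp]
lemma eval_sasepPoly (τ : ℝ) (x y : ℂ) : (sasepPoly τ x).eval y = SASEP τ x y := by
  simp [sasepPoly, SASEP]

lemma SASEP_ofReal_right (τ : ℝ) (x : ℂ) : SASEP τ x τ = τ - x := by
  rw [SASEP]; ring

lemma natDegree_sasepPoly_le (τ : ℝ) (x : ℂ) : (sasepPoly τ x).natDegree ≤ 1 := by
  unfold sasepPoly; compute_degree!

lemma coeff_sasepPoly_one (τ : ℝ) (x : ℂ) : (sasepPoly τ x).coeff 1 = x := by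
  simp [sasepPoly, coeff_C, coeff_one]

section Nodes

variable {ι : Type*} (τ : ℝ) (ξ : ι → ℂ)

lemma natDegree_prod_sasepPoly_le (s : Finset ι) :
    (∏ w ∈ s, sasepPoly τ (ξ w)).natDegree ≤ #s :=
  (natDegree_prod_le _ _).trans <| by
    simpa using sum_le_sum fun w (_ : w ∈ s) => natDegree_sasepPoly_le τ (ξ w)

lemma coeff_prod_sasepPoly_card (s : Finset ι) :
    (∏ w ∈ s, sasepPoly τ (ξ w)).coeff #s = ∏ w ∈ s, ξ w := by
  simpa [coeff_sasepPoly_one] using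
    coeff_prod_of_natDegree_le s _ 1 fun w _ => natDegree_sasepPoly_le τ (ξ w)

lemma isRoot_nodal_sub_prod_sasepPoly (s : Finset ι) :
    (nodal s ξ - ∏ w ∈ s, sasepPoly τ (ξ w)).IsRoot τ := by
  simp [eval_nodal, eval_prod, SASEP_ofReal_right]

lemma eval_node_of_X_sub_C_mul_eq [DecidableEq ι] {s : Finset ι} {F : ℂ[X]}
    (hF : (X - C (τ : ℂ)) * F = nodal s ξ - ∏ w ∈ s, sasepPoly τ (ξ w)) {v : ι} (hv : v ∈ s) :
    F.eval (ξ v) = (1 - ξ v) * ∏ w ∈ s.erase v, SASEP τ (ξ w) (ξ v) := by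
  set B := ∏ w ∈ s.erase v, sasepPoly τ (ξ w)
  -- `(X - τ) (F - (1 - ξ_v) B) = (X - ξ_v) (nodal - B)`: no division by `ξ_v - τ`, which may be 0.
  rw [nodal_eq_mul_nodal_erase hv, ← mul_prod_erase s _ hv] at hF
  have hroot : (F - (1 - C (ξ v)) * B).IsRoot (ξ v) := by
    refine isRoot_of_X_sub_C_mul_eq_X_sub_C_mul (q := nodal (s.erase v) ξ - B) ?_
      (isRoot_nodal_sub_prod_sasepPoly τ ξ _)
    rw [sasepPoly] at hF
    linear_combination hF
  simpa [B, eval_prod, sub_eq_zero] using hroot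

variable [Fintype ι] [DecidableEq ι]

theorem sum_mul_prod_SASEP_div_sub (hξ : Function.Injective ξ) :
    ∑ v, (1 - ξ v) * ∏ w ∈ univ.erase v, SASEP τ (ξ w) (ξ v) / (ξ v - ξ w) = 1 - ∏ w, ξ w := by
  cases isEmpty_or_nonempty ι
  · simp
  obtain ⟨n, hn⟩ := Nat.exists_eq_succ_of_ne_zero (Fintype.card_ne_zero (α := ι))
  obtain ⟨F, hF⟩ := dvd_iff_isRoot.mpr (isRoot_nodal_sub_prod_sasepPoly τ ξ univ)
  have hcard : #(univ : Finset ι) = n + 1 := by rw [card_univ, hn]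
  have hPdeg : ((X - C (τ : ℂ)) * F).natDegree ≤ n + 1 := by
    rw [← hF, ← hcard]
    exact (natDegree_sub_le _ _).trans
      (max_le natDegree_nodal.le (natDegree_prod_sasepPoly_le τ ξ univ))
  have hFdeg := natDegree_le_of_natDegree_X_sub_C_mul_le hPdeg
  have hFcoeff : F.coeff (#(univ : Finset ι) - 1) = 1 - ∏ w, ξ w := by
    rw [hcard, Nat.add_sub_cancel, ← coeff_X_sub_C_mul_of_natDegree_le (a := (τ : ℂ)) hFdeg, ← hF,
      coeff_sub, ← hcard, coeff_prod_sasepPoly_card, ← natDegree_nodal (v := ξ),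
      nodal_monic.coeff_natDegree]
  rw [← hFcoeff, coeff_eq_sum hξ.injOn]
  · refine sum_congr rfl fun v _ => ?_
    rw [eval_node_of_X_sub_C_mul_eq τ ξ hF.symm (mem_univ v), prod_div_distrib, mul_div_assoc]
  · rw [hcard]
    exact (degree_le_of_natDegree_le hFdeg).trans_lt (by exact_mod_cast n.lt_succ_self)

end Nodes

noncomputable def twSummand (τ : ℝ) {k : ℕ} (x : Fin k → ℂ) : ℂ :=
  (∏ p ∈ univ.filter (fun p : Fin k × Fin k => p.1 < p.2),
    SASEP τ (x p.1) (x p.2) / (x p.2 - x p.1)) *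
  (1 / ∏ m : Fin k, (1 - ∏ l ∈ univ.filter (fun l : Fin k => l ≤ m), x l))

namespace Fin

variable {M : Type*} [CommMonoid M]

lemma prod_filter_lt_pairs {n : ℕ} (f : Fin n × Fin n → M) :
    ∏ p ∈ univ.filter (fun p : Fin n × Fin n => p.1 < p.2), f p = ∏ c, ∏ a ∈ Iio c, f (a, c) :=
  prod_finset_product_right _ _ _ fun p => by simp

lemma prod_filter_lt_pairs_succ {n : ℕ} (f : Fin (n + 1) × Fin (n + 1) → M) :
    ∏ p ∈ univ.filter (fun p : Fin (n + 1) × Fin (n + 1) => p.1 < p.2), f p =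
      (∏ p ∈ univ.filter (fun p : Fin n × Fin n => p.1 < p.2), f (p.1.castSucc, p.2.castSucc)) *
        ∏ i : Fin n, f (i.castSucc, last n) := by
  rw [prod_filter_lt_pairs, prod_filter_lt_pairs, prod_univ_castSucc, Iio_last_eq_map, prod_map]
  congr 1
  refine prod_congr rfl fun c _ => ?_
  rw [← map_castSuccEmb_Iio, prod_map]
  rfl

lemma prod_filter_le_castSucc {n : ℕ} (x : Fin (n + 1) → M) (m : Fin n) :
    ∏ l ∈ univ.filter (· ≤ m.castSucc), x l = ∏ l ∈ univ.filter (· ≤ m), x l.castSucc := by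
  rw [filter_ge_eq_Iic, filter_ge_eq_Iic, ← map_castSuccEmb_Iic, prod_map]
  rfl

lemma prod_filter_le_last {n : ℕ} (x : Fin (n + 1) → M) :
    ∏ l ∈ univ.filter (· ≤ last n), x l = ∏ l, x l := by
  rw [filter_true_of_mem fun l _ => le_last l]

lemma prod_succAbove_eq_prod_erase {n : ℕ} (v : Fin (n + 1)) (f : Fin (n + 1) → M) :
    ∏ i : Fin n, f (v.succAbove i) = ∏ w ∈ univ.erase v, f w := by
  rw [← compl_singleton, ← image_succAbove_univ, prod_image succAbove_right_injective.injOn]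

end Fin

lemma twSummand_succ (τ : ℝ) {n : ℕ} (x : Fin (n + 1) → ℂ) :
    twSummand τ x = twSummand τ (fun i => x i.castSucc) *
      ((∏ i : Fin n, SASEP τ (x i.castSucc) (x (Fin.last n)) / (x (Fin.last n) - x i.castSucc)) *
        (1 / (1 - ∏ i, x i))) := by
  rw [twSummand, twSummand, Fin.prod_filter_lt_pairs_succ, Fin.prod_univ_castSucc,
    Fin.prod_filter_le_last, ← one_div_mul_one_div]
  simp only [Fin.prod_filter_le_castSucc]
  ring

namespace Equiv.Perm

def insertLast {n : ℕ} (v : Fin (n + 1)) (π : Perm (Fin n)) : Perm (Fin (n + 1)) :=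
  finSuccEquivLast.trans (π.optionCongr.trans (finSuccEquiv' v).symm)

@[simp]
lemma insertLast_last {n : ℕ} (v : Fin (n + 1)) (π : Perm (Fin n)) :
    insertLast v π (Fin.last n) = v := by
  simp [insertLast]

@[simp]
lemma insertLast_castSucc {n : ℕ} (v : Fin (n + 1)) (π : Perm (Fin n)) (i : Fin n) :
    insertLast v π i.castSucc = v.succAbove (π i) := by
  simp [insertLast]

lemma bijective_insertLast {n : ℕ} :
    Function.Bijective fun p : Fin (n + 1) × Perm (Fin n) => insertLast p.1 p.2 := by
  refine (Fintype.bijective_iff_injective_and_card _).mpr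
    ⟨?_, by simp [Fintype.card_perm, Nat.factorial_succ]⟩
  rintro ⟨v, π⟩ ⟨v', π'⟩ h
  obtain rfl : v = v' := by simpa using DFunLike.congr_fun h (Fin.last n)
  refine Prod.ext rfl (Equiv.ext fun i => (Fin.succAbove_right_injective (p := v)) ?_)
  simpa using DFunLike.congr_fun h i.castSucc

lemma sum_eq_sum_insertLast {M : Type*} [AddCommMonoid M] {n : ℕ} (f : Perm (Fin (n + 1)) → M) :
    ∑ σ, f σ = ∑ v, ∑ π, f (insertLast v π) := by
  rw [← Fintype.sum_prod_type', Fintype.sum_bijective _ bijective_insertLast _ _ fun _ => rfl]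

end Equiv.Perm

open Equiv.Perm in
theorem sum_perm_twSummand (τ : ℝ) {k : ℕ} (ξ : Fin k → ℂ) (hξ : Function.Injective ξ)
    (hprod : ∀ (σ : Equiv.Perm (Fin k)) (m : Fin k), ∏ l ∈ univ.filter (· ≤ m), ξ (σ l) ≠ 1) :
    ∑ σ : Equiv.Perm (Fin k), twSummand τ (ξ ∘ σ) = ∏ j, 1 / (1 - ξ j) := by
  induction k with
  | zero => simp [twSummand]
  | succ n ih =>
    have hne : ∀ j, 1 - ξ j ≠ 0 := fun j => sub_ne_zero.mpr <| Ne.symm <| by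
      simpa [Fin.le_zero_iff, filter_eq'] using hprod (Equiv.swap 0 j) 0
    have hP : 1 - ∏ j, ξ j ≠ 0 := sub_ne_zero.mpr <| Ne.symm <| by
      simpa [Fin.prod_filter_le_last] using hprod 1 (Fin.last n)
    have hinner : ∀ v, ∑ π, twSummand τ (ξ ∘ insertLast v π) =
        (∏ j, 1 / (1 - ξ j)) * (1 / (1 - ∏ j, ξ j)) *
          ((1 - ξ v) * ∏ w ∈ univ.erase v, SASEP τ (ξ w) (ξ v) / (ξ v - ξ w)) := by
      intro v
      have hrest : ∑ π : Equiv.Perm (Fin n), twSummand τ (fun i => ξ (v.succAbove (π i))) =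
          ∏ w, 1 / (1 - ξ (v.succAbove w)) :=
        ih (ξ ∘ v.succAbove) (hξ.comp Fin.succAbove_right_injective) fun π m => by
          simpa [Fin.prod_filter_le_castSucc] using hprod (insertLast v π) m.castSucc
      have hcross : ∀ π : Equiv.Perm (Fin n),
          ∏ i, SASEP τ (ξ (v.succAbove (π i))) (ξ v) / (ξ v - ξ (v.succAbove (π i))) =
            ∏ w ∈ univ.erase v, SASEP τ (ξ w) (ξ v) / (ξ v - ξ w) := fun π => by
        rw [Equiv.prod_comp π fun i =>
            SASEP τ (ξ (v.succAbove i)) (ξ v) / (ξ v - ξ (v.succAbove i)),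
          Fin.prod_succAbove_eq_prod_erase v fun w => SASEP τ (ξ w) (ξ v) / (ξ v - ξ w)]
      simp only [twSummand_succ, Function.comp_apply, insertLast_castSucc, insertLast_last, hcross,
        Equiv.prod_comp]
      rw [← sum_mul, hrest, Fin.prod_univ_succAbove (fun j => 1 / (1 - ξ j)) v]
      field_simp [hne v]
    rw [sum_eq_sum_insertLast, sum_congr rfl fun v _ => hinner v, ← mul_sum,
      sum_mul_prod_SASEP_div_sub τ ξ hξ, mul_assoc, one_div_mul_cancel hP, mul_one]

theorem stmt6_general (k : ℕ) (τ : ℝ)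
    (ξ : Fin k → ℂ) (hinj : Function.Injective ξ)
    (hprod : ∀ (σ : Equiv.Perm (Fin k)) (m : Fin k),
      (∏ l ∈ Finset.univ.filter (fun l : Fin k => l ≤ m), ξ (σ l)) ≠ 1) :
    ∑ σ : Equiv.Perm (Fin k),
      (∏ p ∈ Finset.univ.filter (fun p : Fin k × Fin k => p.1 < p.2),
        SASEP τ (ξ (σ p.1)) (ξ (σ p.2)) / (ξ (σ p.2) - ξ (σ p.1))) *
      (1 / ∏ m : Fin k,
        (1 - ∏ l ∈ Finset.univ.filter (fun l : Fin k => l ≤ m), ξ (σ l)))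
    = ∏ j : Fin k, 1 / (1 - ξ j) :=
  sum_perm_twSummand τ ξ hinj hprod

/-- Dual Tracy–Widom symmetrization identity. -/
theorem stmt6 (k : ℕ) (hk : 1 ≤ k) (τ : ℝ) (hτ0 : 0 < τ) (hτ1 : τ < 1)
    (ξ : Fin k → ℂ) (hξ : ∀ j, ‖ξ j‖ < 1) (hinj : Function.Injective ξ)
    (hprod : ∀ (σ : Equiv.Perm (Fin k)) (m : Fin k),
      (∏ l ∈ Finset.univ.filter (fun l : Fin k => l ≤ m), ξ (σ l)) ≠ 1) :
    ∑ σ : Equiv.Perm (Fin k),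
      (∏ p ∈ Finset.univ.filter (fun p : Fin k × Fin k => p.1 < p.2),
        SASEP τ (ξ (σ p.1)) (ξ (σ p.2)) / (ξ (σ p.2) - ξ (σ p.1))) *
      (1 / ∏ m : Fin k,
        (1 - ∏ l ∈ Finset.univ.filter (fun l : Fin k => l ≤ m), ξ (σ l)))
    = ∏ j : Fin k, 1 / (1 - ξ j) :=
  stmt6_general k τ ξ hinj hprod
end

section
/- If the random variable X takes values in {0,1,2,…} with ℙ(X = n) = ρ^n (ν;q)_n/(q;q)_n · (ρ;q)_∞/(ρν;q)_∞, then for every integer m ≥ 0 with ρ < q^m one has 𝔼[q^{-mX}] = ∏_{j=1}^m (1 - ρν q^{-j})/(1 - ρ q^{-j}). -/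
/-!
Write `c_n = (ν;q)_n/(q;q)_n` and `S(x) = ∑ c_n x^n`. The recursion
`(1 - q^(n+1)) c_(n+1) = (1 - ν q^n) c_n` gives `(1 - x) S(x) = (1 - ν x) S(q x)`; iterating,
`S(x) (x;q)_k = S(q^k x) (ν x;q)_k`, and since `0 ≤ c_n ≤ 1/(q;q)_∞`, dominated convergence
gives `S(q^k x) → 1`, whence the q-binomial theorem `S(x) (x;q)_∞ = (ν x;q)_∞` for `|x| < 1`.
As `ρ^n q^(-mn) = x^n` with `x = ρ q^(-m)`, the expectation is `(ρ;q)_∞/(ρν;q)_∞ · S(x)`, and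
`(x;q)_∞ = ∏_{j=1}^m (1 - ρ q^(-j)) · (ρ;q)_∞` (likewise for `ν x`) leaves the finite product.
-/

open Finset Filter Topology

section Pochhammer

variable {q : ℝ}

lemma abs_pow_mul_le (hq : |q| ≤ 1) (x : ℝ) (k : ℕ) : |q ^ k * x| ≤ |x| := by
  rw [abs_mul, abs_pow]
  exact mul_le_of_le_one_left (abs_nonneg x) (pow_le_one₀ (abs_nonneg q) hq)

lemma one_sub_mul_pow_pos {a : ℝ} (ha : |a| < 1) (hq : |q| ≤ 1) (i : ℕ) :
    0 < 1 - a * q ^ i := by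
  linarith [le_abs_self (q ^ i * a), (abs_pow_mul_le hq a i).trans_lt ha]

lemma summable_neg_mul_pow (a : ℝ) (hq : |q| < 1) : Summable (fun i : ℕ => -(a * q ^ i)) :=
  ((summable_geometric_of_abs_lt_one hq).mul_left a).neg

lemma multipliable_one_sub_mul_pow (a : ℝ) (hq : |q| < 1) :
    Multipliable (fun i : ℕ => 1 - a * q ^ i) := by
  simpa only [sub_eq_add_neg] using
    Real.multipliable_one_add_of_summable (summable_neg_mul_pow a hq)

lemma tprod_one_sub_mul_pow_pos {a : ℝ} (ha : |a| < 1) (hq : |q| < 1) :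
    0 < ∏' i : ℕ, (1 - a * q ^ i) := by
  have hlog : Summable (fun i : ℕ => Real.log (1 - a * q ^ i)) := by
    simpa only [sub_eq_add_neg] using
      Real.summable_log_one_add_of_summable (summable_neg_mul_pow a hq)
  rw [← Real.rexp_tsum_eq_tprod (one_sub_mul_pow_pos ha hq.le) hlog]
  exact Real.exp_pos _

lemma tprod_one_sub_div_pow_mul_pow (c : ℝ) (hq0 : q ≠ 0) (hq : |q| < 1) (m : ℕ) :
    ∏' i : ℕ, (1 - c / q ^ m * q ^ i) =
      (∏ j ∈ range m, (1 - c * q ^ (-(j + 1 : ℤ)))) * ∏' i : ℕ, (1 - c * q ^ i) := by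
  have htail : (fun i : ℕ => 1 - c / q ^ m * q ^ (i + m)) = fun i => 1 - c * q ^ i := by
    funext i
    rw [pow_add]
    field_simp
  have hhead : ∏ i ∈ range m, (1 - c / q ^ m * q ^ i) =
      ∏ j ∈ range m, (1 - c * q ^ (-(j + 1 : ℤ))) := by
    rw [← prod_range_reflect (fun j : ℕ => 1 - c * q ^ (-(j + 1 : ℤ))) m]
    refine prod_congr rfl fun j hj => ?_
    have hjm := mem_range.1 hj
    rw [div_mul_eq_mul_div, mul_div_assoc, ← zpow_natCast q j, ← zpow_natCast q m,
      ← zpow_sub₀ hq0]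
    congr 3
    push_cast [Nat.sub_sub, Nat.cast_sub (show 1 + j ≤ m by omega)]
    ring
  rw [← Multipliable.prod_mul_tprod_nat_mul' (f := fun i => 1 - c / q ^ m * q ^ i) (k := m)
    (htail ▸ multipliable_one_sub_mul_pow c hq), hhead, htail]

end Pochhammer

/-- `(ν;q)_n / (q;q)_n` -/
noncomputable def qBinomCoeff (q ν : ℝ) (n : ℕ) : ℝ :=
  (∏ i ∈ range n, (1 - ν * q ^ i)) / ∏ i ∈ range n, (1 - q ^ (i + 1))

noncomputable def qBinomSeries (q ν x : ℝ) : ℝ := ∑' n : ℕ, x ^ n * qBinomCoeff q ν n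

section Coeff

variable {q ν : ℝ}

lemma one_sub_pow_succ_pos (hq : |q| < 1) (i : ℕ) : 0 < 1 - q ^ (i + 1) := by
  simpa only [pow_succ', one_mul] using one_sub_mul_pow_pos hq hq.le i

lemma prod_one_sub_pow_succ_pos (hq : |q| < 1) (n : ℕ) :
    0 < ∏ i ∈ range n, (1 - q ^ (i + 1)) :=
  prod_pos fun i _ => one_sub_pow_succ_pos hq i

lemma qBinomCoeff_zero : qBinomCoeff q ν 0 = 1 := by
  simp [qBinomCoeff]

lemma qBinomCoeff_succ_mul (hq : |q| < 1) (n : ℕ) :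
    qBinomCoeff q ν (n + 1) * (1 - q ^ (n + 1)) = qBinomCoeff q ν n * (1 - ν * q ^ n) := by
  have hden := (prod_one_sub_pow_succ_pos hq n).ne'
  have hlast := (one_sub_pow_succ_pos hq n).ne'
  rw [qBinomCoeff, qBinomCoeff, prod_range_succ, prod_range_succ]
  field_simp

variable (hq0 : 0 ≤ q) (hq1 : q < 1)
include hq0 hq1

lemma tprod_one_sub_pow_succ_pos : 0 < ∏' i : ℕ, (1 - q ^ (i + 1)) := by
  have hq : |q| < 1 := (abs_of_nonneg hq0).trans_lt hq1
  simpa only [pow_succ', one_mul] using tprod_one_sub_mul_pow_pos hq hq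

lemma tprod_one_sub_pow_succ_le (n : ℕ) :
    ∏' i : ℕ, (1 - q ^ (i + 1)) ≤ ∏ i ∈ range n, (1 - q ^ (i + 1)) := by
  have hq : |q| < 1 := (abs_of_nonneg hq0).trans_lt hq1
  have hmul : Multipliable (fun i : ℕ => 1 - q ^ (i + 1)) := by
    simpa only [pow_succ', one_mul] using multipliable_one_sub_mul_pow q hq
  refine Antitone.le_of_tendsto (antitone_nat_of_succ_le fun k => ?_) hmul.tendsto_prod_tprod_nat n
  rw [prod_range_succ]
  refine mul_le_of_le_one_right (prod_one_sub_pow_succ_pos hq k).le ?_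
  linarith [pow_nonneg hq0 (k + 1)]

variable (hν0 : 0 ≤ ν) (hν1 : ν ≤ 1)
include hν0 hν1

lemma qBinomCoeff_nonneg (n : ℕ) : 0 ≤ qBinomCoeff q ν n := by
  refine div_nonneg (prod_nonneg fun i _ => ?_)
    (prod_one_sub_pow_succ_pos ((abs_of_nonneg hq0).trans_lt hq1) n).le
  nlinarith [pow_le_one₀ hq0 hq1.le (n := i), pow_nonneg hq0 i]

lemma qBinomCoeff_le (n : ℕ) : qBinomCoeff q ν n ≤ (∏' i : ℕ, (1 - q ^ (i + 1)))⁻¹ := by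
  have hnum : ∏ i ∈ range n, (1 - ν * q ^ i) ≤ 1 :=
    prod_le_one (fun i _ => by nlinarith [pow_le_one₀ hq0 hq1.le (n := i), pow_nonneg hq0 i])
      (fun i _ => by nlinarith [pow_nonneg hq0 i])
  calc qBinomCoeff q ν n ≤ 1 / ∏ i ∈ range n, (1 - q ^ (i + 1)) :=
        div_le_div_of_nonneg_right hnum
          (prod_one_sub_pow_succ_pos ((abs_of_nonneg hq0).trans_lt hq1) n).le
    _ ≤ (∏' i : ℕ, (1 - q ^ (i + 1)))⁻¹ := by
        rw [one_div]
        exact inv_anti₀ (tprod_one_sub_pow_succ_pos hq0 hq1) (tprod_one_sub_pow_succ_le hq0 hq1 n)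

lemma norm_pow_mul_qBinomCoeff_le {x r : ℝ} (hx : |x| ≤ r) (n : ℕ) :
    ‖x ^ n * qBinomCoeff q ν n‖ ≤ (∏' i : ℕ, (1 - q ^ (i + 1)))⁻¹ * r ^ n := by
  rw [Real.norm_eq_abs, abs_mul, abs_pow, abs_of_nonneg (qBinomCoeff_nonneg hq0 hq1 hν0 hν1 n),
    mul_comm]
  exact mul_le_mul (qBinomCoeff_le hq0 hq1 hν0 hν1 n) (pow_le_pow_left₀ (abs_nonneg x) hx n)
    (by positivity) (inv_nonneg.2 (tprod_one_sub_pow_succ_pos hq0 hq1).le)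

lemma summable_pow_mul_qBinomCoeff {x : ℝ} (hx : |x| < 1) :
    Summable (fun n : ℕ => x ^ n * qBinomCoeff q ν n) :=
  ((summable_geometric_of_lt_one (abs_nonneg x) hx).mul_left _).of_norm_bounded
    (norm_pow_mul_qBinomCoeff_le hq0 hq1 hν0 hν1 le_rfl)

end Coeff

section Series

variable {q ν : ℝ} (hq0 : 0 ≤ q) (hq1 : q < 1) (hν0 : 0 ≤ ν) (hν1 : ν ≤ 1)
include hq0 hq1 hν0 hν1

lemma one_sub_mul_qBinomSeries {x : ℝ} (hx : |x| < 1) :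
    (1 - x) * qBinomSeries q ν x = (1 - ν * x) * qBinomSeries q ν (q * x) := by
  have hq : |q| < 1 := (abs_of_nonneg hq0).trans_lt hq1
  have hqx : |q * x| < 1 := by
    simpa using (abs_pow_mul_le hq.le x 1).trans_lt hx
  have hs := summable_pow_mul_qBinomCoeff hq0 hq1 hν0 hν1 hx
  have hs' := summable_pow_mul_qBinomCoeff hq0 hq1 hν0 hν1 hqx
  have hshift : ∀ n : ℕ,
      x ^ (n + 1) * qBinomCoeff q ν (n + 1) - (q * x) ^ (n + 1) * qBinomCoeff q ν (n + 1) =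
        x * (x ^ n * qBinomCoeff q ν n) - ν * x * ((q * x) ^ n * qBinomCoeff q ν n) := by
    intro n
    linear_combination x ^ (n + 1) * qBinomCoeff_succ_mul (ν := ν) hq n
  have hdiff : qBinomSeries q ν x - qBinomSeries q ν (q * x) =
      x * qBinomSeries q ν x - ν * x * qBinomSeries q ν (q * x) := by
    rw [qBinomSeries, qBinomSeries, ← hs.tsum_sub hs', (hs.sub hs').tsum_eq_zero_add]
    simp only [hshift, pow_zero, one_mul, sub_self, zero_add]
    rw [(hs.mul_left x).tsum_sub (hs'.mul_left (ν * x)), tsum_mul_left, tsum_mul_left]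
  linear_combination hdiff

lemma qBinomSeries_mul_prod_range {x : ℝ} (hx : |x| < 1) (k : ℕ) :
    qBinomSeries q ν x * ∏ i ∈ range k, (1 - x * q ^ i) =
      qBinomSeries q ν (q ^ k * x) * ∏ i ∈ range k, (1 - ν * x * q ^ i) := by
  induction k with
  | zero => simp
  | succ k ih =>
    have hfun := one_sub_mul_qBinomSeries hq0 hq1 hν0 hν1
      ((abs_pow_mul_le ((abs_of_nonneg hq0).trans_lt hq1).le x k).trans_lt hx)
    rw [← mul_assoc q, ← pow_succ'] at hfun
    rw [prod_range_succ, prod_range_succ, ← mul_assoc, ih]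
    linear_combination (∏ i ∈ range k, (1 - ν * x * q ^ i)) * hfun

lemma tendsto_qBinomSeries_pow_mul {x : ℝ} (hx : |x| < 1) :
    Tendsto (fun k : ℕ => qBinomSeries q ν (q ^ k * x)) atTop (𝓝 1) := by
  have hq : |q| < 1 := (abs_of_nonneg hq0).trans_lt hq1
  have hlim : Tendsto (fun k : ℕ => qBinomSeries q ν (q ^ k * x)) atTop
      (𝓝 (∑' n : ℕ, 0 ^ n * qBinomCoeff q ν n)) := by
    refine tendsto_tsum_of_dominated_convergence
      ((summable_geometric_of_lt_one (abs_nonneg x) hx).mul_left _) (fun n => ?_)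
      (Eventually.of_forall fun k => norm_pow_mul_qBinomCoeff_le hq0 hq1 hν0 hν1
        (abs_pow_mul_le hq.le x k))
    have h0 : Tendsto (fun k : ℕ => q ^ k * x) atTop (𝓝 0) := by
      simpa using (tendsto_pow_atTop_nhds_zero_of_abs_lt_one hq).mul_const x
    exact (h0.pow n).mul_const _
  rwa [tsum_eq_single 0 fun n hn => by rw [zero_pow hn, zero_mul], pow_zero, one_mul,
    qBinomCoeff_zero] at hlim

theorem qBinomSeries_mul_tprod {x : ℝ} (hx : |x| < 1) :
    qBinomSeries q ν x * ∏' i : ℕ, (1 - x * q ^ i) = ∏' i : ℕ, (1 - ν * x * q ^ i) := by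
  have hq : |q| < 1 := (abs_of_nonneg hq0).trans_lt hq1
  have hlhs := ((multipliable_one_sub_mul_pow x hq).tendsto_prod_tprod_nat).const_mul
    (qBinomSeries q ν x)
  have hrhs := (tendsto_qBinomSeries_pow_mul hq0 hq1 hν0 hν1 hx).mul
    (multipliable_one_sub_mul_pow (ν * x) hq).tendsto_prod_tprod_nat
  rw [one_mul] at hrhs
  simp only [qBinomSeries_mul_prod_range hq0 hq1 hν0 hν1 hx] at hlhs
  exact tendsto_nhds_unique hlhs hrhs

end Series

theorem stmt7_general (q ν ρ : ℝ) (hq0 : 0 < q) (hq1 : q < 1)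
    (hν0 : 0 ≤ ν) (hν1 : ν < 1) (hρ0 : 0 ≤ ρ)
    (m : ℕ) (hρm : ρ < q ^ m) :
    ∑' n : ℕ,
      (ρ ^ n * (∏ i ∈ Finset.range n, (1 - ν * q ^ i)) /
          (∏ i ∈ Finset.range n, (1 - q ^ (i + 1))) *
        ((∏' i : ℕ, (1 - ρ * q ^ i)) / (∏' i : ℕ, (1 - ρ * ν * q ^ i)))) *
      q ^ (-(m * n : ℤ))
    = ∏ j ∈ Finset.range m,
        (1 - ρ * ν * q ^ (-(j + 1 : ℤ))) / (1 - ρ * q ^ (-(j + 1 : ℤ))) := by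
  have hq : |q| < 1 := (abs_of_pos hq0).trans_lt hq1
  have hqm : 0 < q ^ m := pow_pos hq0 m
  have hx : |ρ / q ^ m| < 1 := by
    rwa [abs_of_nonneg (by positivity), div_lt_one hqm]
  have hνx : |ρ * ν / q ^ m| < 1 := by
    rw [mul_comm, mul_div_assoc, abs_mul, abs_of_nonneg hν0]
    exact (mul_le_of_le_one_left (abs_nonneg _) hν1.le).trans_lt hx
  have hterm : ∀ n : ℕ,
      ρ ^ n * (∏ i ∈ range n, (1 - ν * q ^ i)) / (∏ i ∈ range n, (1 - q ^ (i + 1))) *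
        ((∏' i : ℕ, (1 - ρ * q ^ i)) / (∏' i : ℕ, (1 - ρ * ν * q ^ i))) * q ^ (-(m * n : ℤ)) =
      (∏' i : ℕ, (1 - ρ * q ^ i)) / (∏' i : ℕ, (1 - ρ * ν * q ^ i)) *
        ((ρ / q ^ m) ^ n * qBinomCoeff q ν n) := by
    intro n
    rw [qBinomCoeff, div_pow, ← pow_mul, zpow_neg, ← Nat.cast_mul, zpow_natCast]
    ring
  have hbinom := qBinomSeries_mul_tprod hq0.le hq1 hν0 hν1.le hx
  have hpos := tprod_one_sub_mul_pow_pos hx hq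
  have hνpos := tprod_one_sub_mul_pow_pos hνx hq
  rw [mul_div_assoc', mul_comm ν ρ] at hbinom
  rw [tprod_one_sub_div_pow_mul_pow _ hq0.ne' hq m] at hpos hνpos
  rw [tprod_one_sub_div_pow_mul_pow _ hq0.ne' hq m, tprod_one_sub_div_pow_mul_pow _ hq0.ne' hq m]
    at hbinom
  rw [tsum_congr hterm, tsum_mul_left, ← qBinomSeries, prod_div_distrib]
  obtain ⟨hA, hP⟩ := mul_ne_zero_iff.1 hpos.ne'
  have hPν := right_ne_zero_of_mul hνpos.ne'
  field_simp
  linear_combination hbinom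

/-- For `X` distributed as `ℙ(X=n) = ρ^n (ν;q)_n/(q;q)_n · (ρ;q)_∞/(ρν;q)_∞`,
one has `𝔼[q^{-mX}] = ∏_{j=1}^m (1-ρν q^{-j})/(1-ρ q^{-j})` whenever `ρ < q^m`. -/
theorem stmt7 (q ν ρ : ℝ) (hq0 : 0 < q) (hq1 : q < 1)
    (hν0 : 0 ≤ ν) (hν1 : ν < 1) (hρ0 : 0 ≤ ρ) (hρ1 : ρ < 1)
    (m : ℕ) (hρm : ρ < q ^ m) :
    ∑' n : ℕ,
      (ρ ^ n * (∏ i ∈ Finset.range n, (1 - ν * q ^ i)) /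
          (∏ i ∈ Finset.range n, (1 - q ^ (i + 1))) *
        ((∏' i : ℕ, (1 - ρ * q ^ i)) / (∏' i : ℕ, (1 - ρ * ν * q ^ i)))) *
      q ^ (-(m * n : ℤ))
    = ∏ j ∈ Finset.range m,
        (1 - ρ * ν * q ^ (-(j + 1 : ℤ))) / (1 - ρ * q ^ (-(j + 1 : ℤ))) :=
  stmt7_general q ν ρ hq0 hq1 hν0 hν1 hρ0 m hρm
end

section
/- The ASEP eigenfunction Ψ^ASEP_z(x) = ∑_{σ ∈ S(k)} ∏_{B<A} (z_{σ(B)} - τ z_{σ(A)})/(z_{σ(B)} - z_{σ(A)}) ∏_{j=1}^k ((1 + z_{σ(j)})/(1 + z_{σ(j)}/τ))^{-x_j}, viewed as a function of x ∈ ℤ^k, satisfies the ASEP two-body boundary conditions: for each 1 ≤ i ≤ k-1 and each x ∈ ℤ^k with x_{i+1} = x_i + 1, one has p·Ψ^ASEP_z(x⁺_i) + q·Ψ^ASEP_z(x⁻_{i+1}) - Ψ^ASEP_z(x) = 0, where p = τ/(1+τ), q = 1/(1+τ), x⁺_i increases x_i by 1, and x⁻_{i+1} decreases x_{i+1} by 1.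 -/
/-!
`Ψ^ASEP_z` is a sum over `σ` of plane waves `∏ₗ w(z_{σ l})^{-x_l}`, each weighted by the product
of the scattering factors `S(a, b) = (a - τ b)/(a - b)` over the ordered pairs of positions. The
boundary operator `p f(x⁺_i) + q f(x⁻_j) - f(x)` is linear and multiplies a plane wave by a
constant, so it suffices to let it act on the summands of `σ` and of `σ ∘ (i j)` together.
Because `i` and `j = i + 1` are adjacent, the transposition preserves the relative order of
every other pair of positions, so the two amplitudes differ only in `S(z_{σ i}, z_{σ j})` versus
`S(z_{σ j}, z_{σ i})`; and since `x_j = x_i + 1`, the two plane waves at `x` differ by the factor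
`w(z_{σ j}) / w(z_{σ i})`. The two contributions then cancel by a rational identity in two
variables, and the sum vanishes by the fixed-point-free involution `σ ↦ σ ∘ (i j)`.
-/

open Finset

/-- The ASEP Bethe-ansatz eigenfunction `Ψ^ASEP_z(x)`, as a function on `ℤ^k`. -/
noncomputable def PsiASEP (k : ℕ) (τ : ℝ) (z : Fin k → ℂ) (x : Fin k → ℤ) : ℂ :=
  ∑ σ : Equiv.Perm (Fin k),
    (∏ p ∈ Finset.univ.filter (fun p : Fin k × Fin k => p.1 < p.2),
      (z (σ p.1) - (τ : ℂ) * z (σ p.2)) / (z (σ p.1) - z (σ p.2))) *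
    ∏ j : Fin k, ((1 + z (σ j)) / (1 + z (σ j) / (τ : ℂ))) ^ (-(x j))

noncomputable section

namespace ASEP

section TwoBody

variable {K : Type*} [Field K]

def weight (τ u : K) : K := (1 + u) / (1 + u / τ)

def scatteringFactor (τ a b : K) : K := (a - τ * b) / (a - b)

theorem weight_ne_zero {τ u : K} (hτ : τ ≠ 0) (hu : u ≠ -1) (huτ : u ≠ -τ) : weight τ u ≠ 0 := by
  unfold weight
  refine div_ne_zero (fun h => hu (by linear_combination h)) fun h => huτ ?_
  field_simp at h
  linear_combination h

theorem scatteringFactor_two_body {τ a b : K} (hτ : τ ≠ 0) (hτ1 : 1 + τ ≠ 0) (hab : a ≠ b)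
    (haτ : a ≠ -τ) (hbτ : b ≠ -τ) :
    scatteringFactor τ a b *
        (τ / (1 + τ) + 1 / (1 + τ) * weight τ a * weight τ b - weight τ a) +
      scatteringFactor τ b a *
        (τ / (1 + τ) + 1 / (1 + τ) * weight τ a * weight τ b - weight τ b) = 0 := by
  have hab' : a - b ≠ 0 := sub_ne_zero.mpr hab
  have ha : τ + a ≠ 0 := fun h => haτ (by linear_combination h)
  have hb : τ + b ≠ 0 := fun h => hbτ (by linear_combination h)
  have hwa : weight τ a = τ * (1 + a) / (τ + a) := by
    unfold weight; field_simp
  have hwb : weight τ b = τ * (1 + b) / (τ + b) := by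
    unfold weight; field_simp
  rw [hwa, hwb, scatteringFactor, scatteringFactor]
  field_simp
  ring

end TwoBody

theorem comp_swap_eq_update_update {ι : Type*} [DecidableEq ι] {i j : ι} {x : ι → ℤ}
    (hx : x j = x i + 1) :
    x ∘ Equiv.swap i j = Function.update (Function.update x i (x i + 1)) j (x j - 1) := by
  funext l
  simp only [Function.comp_apply, Equiv.swap_apply_def, Function.update_apply]
  split_ifs <;> subst_vars <;> omega

section PlaneWave

variable {ι G : Type*} [Fintype ι] [CommGroupWithZero G]

def planeWave (W : ι → G) (y : ι → ℤ) : G := ∏ l, W l ^ (-y l)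

theorem planeWave_update [DecidableEq ι] (W : ι → G) (y : ι → ℤ) {i : ι} (hW : W i ≠ 0)
    (c : ℤ) : planeWave W (Function.update y i c) = planeWave W y * W i ^ (y i - c) := by
  have hrest : ∏ l ∈ {i}ᶜ, W l ^ (-Function.update y i c l) = ∏ l ∈ {i}ᶜ, W l ^ (-y l) :=
    prod_congr rfl fun l hl => by rw [Function.update_of_ne (by simpa using hl)]
  rw [planeWave, planeWave, Fintype.prod_eq_mul_prod_compl i, hrest, Function.update_self,
    Fintype.prod_eq_mul_prod_compl i, mul_right_comm, ← zpow_add₀ hW]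
  ring_nf

theorem planeWave_comp_perm (W : ι → G) (e : Equiv.Perm ι) (y : ι → ℤ) :
    planeWave (W ∘ e) y = planeWave W (y ∘ e.symm) :=
  (Equiv.prod_comp e.symm fun l => W (e l) ^ (-y l)).symm.trans
    (by simp only [Equiv.apply_symm_apply]; rfl)

variable [DecidableEq ι] {i j : ι}

theorem planeWave_comp_swap {W : ι → G} (hi : W i ≠ 0) (hj : W j ≠ 0) {x : ι → ℤ}
    (hx : x j = x i + 1) :
    planeWave (W ∘ Equiv.swap i j) x = planeWave W x * (W i)⁻¹ * W j := by
  have hne : i ≠ j := fun h => by subst h; omega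
  rw [planeWave_comp_perm, Equiv.symm_swap, comp_swap_eq_update_update hx,
    planeWave_update W _ hj, Function.update_of_ne hne.symm, planeWave_update W _ hi]
  simp only [sub_add_cancel_left, sub_sub_cancel, zpow_neg_one, zpow_one]

end PlaneWave

section AdjacentSwap

variable {k : ℕ} {i j : Fin k}

theorem swap_lt_swap_of_lt {a b : Fin k} (hij : (j : ℕ) = i + 1) (hab : a < b)
    (hne : (a, b) ≠ (i, j)) : Equiv.swap i j a < Equiv.swap i j b := by
  simp only [Equiv.swap_apply_def]
  simp only [ne_eq, Prod.mk.injEq, Fin.lt_def, Fin.ext_iff] at *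
  split_ifs <;> omega

def ltPairs (k : ℕ) : Finset (Fin k × Fin k) := univ.filter fun p => p.1 < p.2

theorem prod_erase_ltPairs_swap {M : Type*} [CommMonoid M] (hij : (j : ℕ) = i + 1)
    (F : Fin k → Fin k → M) :
    ∏ p ∈ (ltPairs k).erase (i, j), F (Equiv.swap i j p.1) (Equiv.swap i j p.2) =
      ∏ p ∈ (ltPairs k).erase (i, j), F p.1 p.2 := by
  have hmaps : ∀ p ∈ (ltPairs k).erase (i, j),
      (Equiv.swap i j p.1, Equiv.swap i j p.2) ∈ (ltPairs k).erase (i, j) := by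
    intro p hp
    simp only [ltPairs, mem_erase, mem_filter, mem_univ, true_and] at hp ⊢
    refine ⟨fun h => ?_, swap_lt_swap_of_lt hij hp.2 hp.1⟩
    simp only [Prod.ext_iff, Equiv.swap_apply_eq_iff, Equiv.swap_apply_left,
      Equiv.swap_apply_right] at h
    have := hp.2
    rw [h.1, h.2, Fin.lt_def] at this
    omega
  exact prod_nbij' (fun p => (Equiv.swap i j p.1, Equiv.swap i j p.2))
    (fun p => (Equiv.swap i j p.1, Equiv.swap i j p.2)) hmaps hmaps
    (fun p _ => by simp) (fun p _ => by simp) (fun p _ => by simp)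

end AdjacentSwap

section Amplitude

variable {K : Type*} [Field K] {k : ℕ}

def amplitude (τ : K) (z : Fin k → K) (σ : Equiv.Perm (Fin k)) : K :=
  ∏ p ∈ ltPairs k, scatteringFactor τ (z (σ p.1)) (z (σ p.2))

theorem amplitude_eq_mul_prod_erase (τ : K) (z : Fin k → K) (σ : Equiv.Perm (Fin k))
    {i j : Fin k} (hij : i < j) :
    amplitude τ z σ = scatteringFactor τ (z (σ i)) (z (σ j)) *
      ∏ p ∈ (ltPairs k).erase (i, j), scatteringFactor τ (z (σ p.1)) (z (σ p.2)) := by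
  rw [amplitude, ← mul_prod_erase _ _ (show (i, j) ∈ ltPairs k by simp [ltPairs, hij])]

theorem amplitude_mul_swap (τ : K) (z : Fin k → K) (σ : Equiv.Perm (Fin k)) {i j : Fin k}
    (hij : (j : ℕ) = i + 1) :
    amplitude τ z (σ * Equiv.swap i j) = scatteringFactor τ (z (σ j)) (z (σ i)) *
      ∏ p ∈ (ltPairs k).erase (i, j), scatteringFactor τ (z (σ p.1)) (z (σ p.2)) := by
  rw [amplitude_eq_mul_prod_erase τ z _ (i := i) (j := j) (Fin.lt_def.mpr (by omega))]
  simp only [Equiv.Perm.mul_apply, Equiv.swap_apply_left, Equiv.swap_apply_right]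
  rw [prod_erase_ltPairs_swap hij fun a b => scatteringFactor τ (z (σ a)) (z (σ b))]

def betheTerm (τ : K) (z : Fin k → K) (σ : Equiv.Perm (Fin k)) : (Fin k → ℤ) → K :=
  fun y => amplitude τ z σ * planeWave (fun l => weight τ (z (σ l))) y

end Amplitude

section BoundaryDefect

variable {ι : Type*} [DecidableEq ι]

def boundaryDefect (τ : ℝ) (f : (ι → ℤ) → ℂ) (x : ι → ℤ) (i j : ι) : ℂ :=
  ((τ / (1 + τ) : ℝ) : ℂ) * f (Function.update x i (x i + 1)) +
    ((1 / (1 + τ) : ℝ) : ℂ) * f (Function.update x j (x j - 1)) - f x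

variable (τ : ℝ) (x : ι → ℤ) (i j : ι)

theorem boundaryDefect_sum {α : Type*} (s : Finset α) (f : α → (ι → ℤ) → ℂ) :
    boundaryDefect τ (fun y => ∑ a ∈ s, f a y) x i j = ∑ a ∈ s, boundaryDefect τ (f a) x i j := by
  simp only [boundaryDefect, mul_sum, ← sum_add_distrib, ← sum_sub_distrib]

theorem boundaryDefect_const_mul (c : ℂ) (f : (ι → ℤ) → ℂ) :
    boundaryDefect τ (fun y => c * f y) x i j = c * boundaryDefect τ f x i j := by
  simp only [boundaryDefect]
  ring

theorem boundaryDefect_planeWave [Fintype ι] {W : ι → ℂ} (hi : W i ≠ 0) (hj : W j ≠ 0) :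
    boundaryDefect τ (planeWave W) x i j =
      planeWave W x * (((τ / (1 + τ) : ℝ) : ℂ) * (W i)⁻¹ + ((1 / (1 + τ) : ℝ) : ℂ) * W j - 1) := by
  rw [boundaryDefect, planeWave_update W x hi, planeWave_update W x hj]
  simp only [sub_add_cancel_left, sub_sub_cancel, zpow_neg_one, zpow_one]
  ring

end BoundaryDefect

theorem boundaryDefect_betheTerm_add_mul_swap {k : ℕ} {τ : ℝ} (hτ : 0 < τ) {z : Fin k → ℂ}
    (hinj : Function.Injective z) (hz1 : ∀ l, z l ≠ -1) (hzτ : ∀ l, z l ≠ -(τ : ℂ))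
    {x : Fin k → ℤ} {i j : Fin k} (hij : (j : ℕ) = i + 1) (hx : x j = x i + 1)
    (σ : Equiv.Perm (Fin k)) :
    boundaryDefect τ (betheTerm (τ : ℂ) z σ) x i j +
      boundaryDefect τ (betheTerm (τ : ℂ) z (σ * Equiv.swap i j)) x i j = 0 := by
  have hτC : (τ : ℂ) ≠ 0 := Complex.ofReal_ne_zero.mpr hτ.ne'
  have hτ1 : 1 + (τ : ℂ) ≠ 0 := by exact_mod_cast (by positivity : (1 + τ : ℝ) ≠ 0)
  have hne : i ≠ j := fun h => by rw [h] at hij; omega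
  set W : Fin k → ℂ := fun l => weight (τ : ℂ) (z (σ l))
  have hW : ∀ l, W l ≠ 0 := fun l => weight_ne_zero hτC (hz1 (σ l)) (hzτ (σ l))
  have hWs : ∀ l, (W ∘ Equiv.swap i j) l ≠ 0 := fun l => hW _
  unfold betheTerm
  rw [boundaryDefect_const_mul, boundaryDefect_const_mul]
  change amplitude _ z σ * boundaryDefect τ (planeWave W) x i j +
    amplitude _ z (σ * Equiv.swap i j) * boundaryDefect τ (planeWave (W ∘ Equiv.swap i j)) x i j = 0
  rw [boundaryDefect_planeWave (hi := hW i) (hj := hW j),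
    boundaryDefect_planeWave (hi := hWs i) (hj := hWs j), planeWave_comp_swap (hW i) (hW j) hx,
    amplitude_eq_mul_prod_erase _ _ _ (Fin.lt_def.mpr (by omega) : i < j),
    amplitude_mul_swap _ _ _ hij]
  simp only [Function.comp_apply, Equiv.swap_apply_left, Equiv.swap_apply_right]
  push_cast
  have key : scatteringFactor (τ : ℂ) (z (σ i)) (z (σ j)) *
        ((τ : ℂ) / (1 + τ) + 1 / (1 + τ) * W i * W j - W i) +
      scatteringFactor (τ : ℂ) (z (σ j)) (z (σ i)) *
        ((τ : ℂ) / (1 + τ) + 1 / (1 + τ) * W i * W j - W j) = 0 :=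
    scatteringFactor_two_body hτC hτ1 (hinj.ne (σ.injective.ne hne)) (hzτ (σ i)) (hzτ (σ j))
  set R := ∏ p ∈ (ltPairs k).erase (i, j), scatteringFactor (τ : ℂ) (z (σ p.1)) (z (σ p.2))
  -- the two contributions are `R * planeWave W x * (W i)⁻¹` times the two summands of `key`
  linear_combination R * planeWave W x * ((W i)⁻¹ * key -
    scatteringFactor (τ : ℂ) (z (σ i)) (z (σ j)) * (1 / (1 + τ) * W j - 1) *
      inv_mul_cancel₀ (hW i) +
    scatteringFactor (τ : ℂ) (z (σ j)) (z (σ i)) * (W i)⁻¹ * (τ / (1 + τ)) *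
      mul_inv_cancel₀ (hW j))

theorem PsiASEP_eq_sum_betheTerm (k : ℕ) (τ : ℝ) (z : Fin k → ℂ) :
    PsiASEP k τ z = fun y => ∑ σ, betheTerm (τ : ℂ) z σ y :=
  rfl

end ASEP

end

theorem stmt13_general (k : ℕ) (τ : ℝ) (hτ0 : 0 < τ)
    (z : Fin k → ℂ) (hinj : Function.Injective z)
    (hz1 : ∀ j, z j ≠ -1) (hzτ : ∀ j, z j ≠ -(τ : ℂ))
    (x : Fin k → ℤ) (i j : Fin k) (hij : (j : ℕ) = (i : ℕ) + 1)
    (hx : x j = x i + 1) :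
    ((τ / (1 + τ) : ℝ) : ℂ) * PsiASEP k τ z (Function.update x i (x i + 1)) +
      ((1 / (1 + τ) : ℝ) : ℂ) * PsiASEP k τ z (Function.update x j (x j - 1)) -
      PsiASEP k τ z x = 0 := by
  have hne : i ≠ j := fun h => by rw [h] at hij; omega
  change ASEP.boundaryDefect τ (PsiASEP k τ z) x i j = 0
  rw [ASEP.PsiASEP_eq_sum_betheTerm, ASEP.boundaryDefect_sum]
  exact sum_ninvolution (· * Equiv.swap i j)
    (ASEP.boundaryDefect_betheTerm_add_mul_swap hτ0 hinj hz1 hzτ hij hx)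
    (fun _ _ h => hne (Equiv.mul_swap_eq_iff.mp h)) (fun _ => mem_univ _)
    (Equiv.mul_swap_mul_self i j)

/-- The ASEP eigenfunction satisfies the two-body boundary conditions:
if `x_{i+1} = x_i + 1` then `p Ψ(x⁺_i) + q Ψ(x⁻_{i+1}) - Ψ(x) = 0` with
`p = τ/(1+τ)`, `q = 1/(1+τ)`. -/
theorem stmt13 (k : ℕ) (τ : ℝ) (hτ0 : 0 < τ) (hτ1 : τ < 1)
    (z : Fin k → ℂ) (hinj : Function.Injective z)
    (hz1 : ∀ j, z j ≠ -1) (hzτ : ∀ j, z j ≠ -(τ : ℂ))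
    (x : Fin k → ℤ) (i j : Fin k) (hij : (j : ℕ) = (i : ℕ) + 1)
    (hx : x j = x i + 1) :
    ((τ / (1 + τ) : ℝ) : ℂ) * PsiASEP k τ z (Function.update x i (x i + 1)) +
      ((1 / (1 + τ) : ℝ) : ℂ) * PsiASEP k τ z (Function.update x j (x j - 1)) -
      PsiASEP k τ z x = 0 :=
  stmt13_general k τ hτ0 z hinj hz1 hzτ x i j hij hx
end

section
/- The ASEP eigenfunction is an eigenfunction of the free ASEP generator: for Ψ^ASEP_z as defined, and the free operator (L u)(x) = ∑_{i=1}^k [p·u(x + e_i) + q·u(x - e_i) - u(x)] acting on functions on ℤ^k (p = τ/(1+τ), q = 1/(1+τ)), one has L Ψ^ASEP_z = λ(z)·Ψ^ASEP_z with eigenvalue λ(z) = -((1-τ)²/(1+τ)) ∑_{j=1}^k 1/((1 + z_j)(1 + τ/z_j)). -/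
/-!
The free generator acts on each coordinate separately, so on a product `∏ j, g_j (x_j)` of
one-particle functions satisfying `p g_j(n+1) + q g_j(n-1) - g_j(n) = μ_j g_j(n)` it acts by
`∑ j, μ_j`. Every summand of `Ψ^ASEP_z` is a constant multiple of such a product, with
`g_j(n) = f(z_{σ j})^(-n)`, `f(w) = (1 + w)/(1 + w/τ)`, and `μ_j` depending only on `z_{σ j}`;
hence all summands share the eigenvalue `∑ j, μ(z_j)`.
-/

open Finset

open Function

section FreeGenerator

variable {ι R : Type*} [Fintype ι] [DecidableEq ι] [CommRing R]

def freeGenerator (p q : R) (u : (ι → ℤ) → R) (x : ι → ℤ) : R :=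
  ∑ i, (p * u (update x i (x i + 1)) + q * u (update x i (x i - 1)) - u x)

theorem freeGenerator_sum {α : Type*} (p q : R) (s : Finset α) (u : α → (ι → ℤ) → R)
    (x : ι → ℤ) :
    freeGenerator p q (fun y => ∑ a ∈ s, u a y) x = ∑ a ∈ s, freeGenerator p q (u a) x := by
  simp only [freeGenerator, mul_sum, ← sum_sub_distrib, ← sum_add_distrib]
  exact sum_comm

theorem freeGenerator_const_mul (p q c : R) (u : (ι → ℤ) → R) (x : ι → ℤ) :
    freeGenerator p q (fun y => c * u y) x = c * freeGenerator p q u x := by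
  simp only [freeGenerator, mul_sum]
  exact sum_congr rfl fun _ _ => by ring

theorem prod_apply_update (g : ι → ℤ → R) (x : ι → ℤ) (i : ι) (v : ℤ) :
    ∏ j, g j (update x i v j) = g i v * ∏ j ∈ univ.erase i, g j (x j) := by
  simp_rw [apply_update g x i v, prod_update_of_mem (mem_univ i), sdiff_singleton_eq_erase]

theorem freeGenerator_prod (p q : R) (g : ι → ℤ → R) (μ : ι → R)
    (hg : ∀ j n, p * g j (n + 1) + q * g j (n - 1) - g j n = μ j * g j n) (x : ι → ℤ) :
    freeGenerator p q (fun y => ∏ j, g j (y j)) x = (∑ j, μ j) * ∏ j, g j (x j) := by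
  rw [freeGenerator, sum_mul]
  refine sum_congr rfl fun i _ => ?_
  rw [prod_apply_update, prod_apply_update, ← mul_prod_erase univ _ (mem_univ i)]
  linear_combination (∏ j ∈ univ.erase i, g j (x j)) * hg i (x i)

end FreeGenerator

theorem zpow_neg_shift_combination {K : Type*} [Field K] {f : K} (hf : f ≠ 0) (p q : K)
    (n : ℤ) :
    p * f ^ (-(n + 1)) + q * f ^ (-(n - 1)) - f ^ (-n) = (p * f⁻¹ + q * f - 1) * f ^ (-n) := by
  rw [neg_add', neg_sub', sub_neg_eq_add, zpow_sub_one₀ hf, zpow_add_one₀ hf]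
  ring

theorem asep_one_particle_eigen {K : Type*} [Field K] {τ w : K} (hτ : τ ≠ 0)
    (hτ1 : 1 + τ ≠ 0) (hw : w ≠ 0) (hw1 : 1 + w ≠ 0) (hwτ : τ + w ≠ 0) (n : ℤ) :
    τ / (1 + τ) * ((1 + w) / (1 + w / τ)) ^ (-(n + 1)) +
        1 / (1 + τ) * ((1 + w) / (1 + w / τ)) ^ (-(n - 1)) - ((1 + w) / (1 + w / τ)) ^ (-n)
      = -((1 - τ) ^ 2 / (1 + τ)) * (1 / ((1 + w) * (1 + τ / w))) *
        ((1 + w) / (1 + w / τ)) ^ (-n) := by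
  have hwτ' : 1 + w / τ ≠ 0 := by rw [one_add_div hτ]; exact div_ne_zero hwτ hτ
  have hτw : w + τ ≠ 0 := by rwa [add_comm]
  rw [zpow_neg_shift_combination (div_ne_zero hw1 hwτ')]
  congr 1
  rw [one_add_div hτ, one_add_div hw]
  field_simp
  ring

theorem stmt14_general (k : ℕ) (τ : ℝ) (hτ0 : 0 < τ)
    (z : Fin k → ℂ)
    (hz1 : ∀ j, z j ≠ -1) (hzτ : ∀ j, z j ≠ -(τ : ℂ)) (hz0 : ∀ j, z j ≠ 0)
    (x : Fin k → ℤ) :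
    ∑ i : Fin k,
      (((τ / (1 + τ) : ℝ) : ℂ) * PsiASEP k τ z (Function.update x i (x i + 1)) +
        ((1 / (1 + τ) : ℝ) : ℂ) * PsiASEP k τ z (Function.update x i (x i - 1)) -
        PsiASEP k τ z x)
    = (-(((1 - τ) ^ 2 / (1 + τ) : ℝ) : ℂ) *
        ∑ j : Fin k, 1 / ((1 + z j) * (1 + (τ : ℂ) / z j))) *
      PsiASEP k τ z x := by
  have hτ : (τ : ℂ) ≠ 0 := by exact_mod_cast hτ0.ne'
  have hτ1 : 1 + (τ : ℂ) ≠ 0 := by exact_mod_cast (by positivity : 1 + τ ≠ 0)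
  have hμ (j : Fin k) := asep_one_particle_eigen hτ hτ1 (hz0 j)
    (fun h => hz1 j (eq_neg_of_add_eq_zero_right h))
    (fun h => hzτ j (eq_neg_of_add_eq_zero_right h))
  push_cast
  change freeGenerator _ _ (PsiASEP k τ z) x = _
  unfold PsiASEP
  rw [freeGenerator_sum, mul_sum]
  refine sum_congr rfl fun σ _ => ?_
  rw [freeGenerator_const_mul,
    freeGenerator_prod _ _ (fun j n => ((1 + z (σ j)) / (1 + z (σ j) / τ)) ^ (-n)) _
      (fun j => hμ (σ j)), ← mul_sum,
    Equiv.sum_comp σ (fun j => 1 / ((1 + z j) * (1 + (τ : ℂ) / z j)))]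
  ring

/-- The ASEP eigenfunction is an eigenfunction of the free ASEP generator
`(L u)(x) = ∑_i [p u(x+e_i) + q u(x-e_i) - u(x)]` with eigenvalue
`-((1-τ)²/(1+τ)) ∑_j 1/((1+z_j)(1+τ/z_j))`. -/
theorem stmt14 (k : ℕ) (τ : ℝ) (hτ0 : 0 < τ) (hτ1 : τ < 1)
    (z : Fin k → ℂ) (hinj : Function.Injective z)
    (hz1 : ∀ j, z j ≠ -1) (hzτ : ∀ j, z j ≠ -(τ : ℂ)) (hz0 : ∀ j, z j ≠ 0)
    (x : Fin k → ℤ) :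
    ∑ i : Fin k,
      (((τ / (1 + τ) : ℝ) : ℂ) * PsiASEP k τ z (Function.update x i (x i + 1)) +
        ((1 / (1 + τ) : ℝ) : ℂ) * PsiASEP k τ z (Function.update x i (x i - 1)) -
        PsiASEP k τ z x)
    = (-(((1 - τ) ^ 2 / (1 + τ) : ℝ) : ℂ) *
        ∑ j : Fin k, 1 / ((1 + z j) * (1 + (τ : ℂ) / z j))) *
      PsiASEP k τ z x :=
  stmt14_general k τ hτ0 z hz1 hzτ hz0 x
end

section
/- The q-Hahn two-body boundary operator acts diagonally on products of one-particle eigenfunctions: with f_z(n) = ((1-z)/(1-νz))^{-n} and the operator (B u)(n_1, n_2) = ν(1-q) u(n_1 - 1, n_2 - 1) + (q-ν) u(n_1, n_2 - 1) + (1-q) u(n_1, n_2) - (1-qν) u(n_1 - 1, n_2), one has B(f_{z_1} ⊗ f_{z_2})(n_1, n_2) = ((1-ν)²/((1-νz_1)(1-νz_2))) · (z_1 - q z_2) · f_{z_1}(n_1) f_{z_2}(n_2) for all n_1, n_2 ∈ ℤ. In particular, the function u(n_1,n_2) = (z_1 - q z_2) f_{z_2}(n_1) f_{z_1}(n_2)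 - (z_2 - q z_1) f_{z_1}(n_1) f_{z_2}(n_2) satisfies (B u)(n,n) = 0 for all n ∈ ℤ. -/
/-!
Each `f_z` is an eigenfunction of the shift `n ↦ n - 1`, so `B` multiplies `f_{z₁} ⊗ f_{z₂}` by a
polynomial in the two shift eigenvalues, which factors as `(1-ν)²(z₁ - q z₂)/((1-νz₁)(1-νz₂))`.
Apart from the factor `z₁ - q z₂` this multiplier is symmetric in `z₁, z₂`, so the two terms of
the antisymmetrized `u` cancel on the diagonal.
-/

noncomputable def fq (ν z : ℂ) (n : ℤ) : ℂ := ((1 - z) / (1 - ν * z)) ^ (-n)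

section BoundaryOperator

variable {R : Type*} [CommRing R]

def boundaryOp (q ν : R) (u : ℤ → ℤ → R) (n1 n2 : ℤ) : R :=
  ν * (1 - q) * u (n1 - 1) (n2 - 1) + (q - ν) * u n1 (n2 - 1) + (1 - q) * u n1 n2 -
    (1 - q * ν) * u (n1 - 1) n2

/-- The multiplier by which `B` acts on `f ⊗ g` when `f (n - 1) = a * f n` and
`g (n - 1) = b * g n`. -/
def boundarySymbol (q ν a b : R) : R :=
  ν * (1 - q) * a * b + (q - ν) * b + (1 - q) - (1 - q * ν) * a

theorem boundaryOp_mul_of_shift (q ν a b : R) {f g : ℤ → R}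
    (hf : ∀ n, f (n - 1) = a * f n) (hg : ∀ n, g (n - 1) = b * g n) (n1 n2 : ℤ) :
    boundaryOp q ν (fun m1 m2 => f m1 * g m2) n1 n2 =
      boundarySymbol q ν a b * (f n1 * g n2) := by
  simp only [boundaryOp, boundarySymbol, hf, hg]
  ring

end BoundaryOperator

theorem boundarySymbol_eq {K : Type*} [Field K] (q ν z1 z2 : K)
    (h1 : 1 - ν * z1 ≠ 0) (h2 : 1 - ν * z2 ≠ 0) :
    boundarySymbol q ν ((1 - z1) / (1 - ν * z1)) ((1 - z2) / (1 - ν * z2)) =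
      (1 - ν) ^ 2 / ((1 - ν * z1) * (1 - ν * z2)) * (z1 - q * z2) := by
  rw [boundarySymbol]
  field_simp
  ring

theorem fq_sub_one {ν z : ℂ} (hz : z ≠ 1) (hνz : ν * z ≠ 1) (n : ℤ) :
    fq ν z (n - 1) = (1 - z) / (1 - ν * z) * fq ν z n := by
  have hratio : (1 - z) / (1 - ν * z) ≠ 0 :=
    div_ne_zero (sub_ne_zero.mpr hz.symm) (sub_ne_zero.mpr hνz.symm)
  rw [fq, fq, show -(n - 1) = 1 + -n by ring, zpow_add₀ hratio, zpow_one]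

theorem boundaryOp_fq_mul_fq (q : ℂ) {ν z1 z2 : ℂ} (h1 : z1 ≠ 1) (h2 : z2 ≠ 1)
    (h1' : ν * z1 ≠ 1) (h2' : ν * z2 ≠ 1) (n1 n2 : ℤ) :
    boundaryOp q ν (fun m1 m2 => fq ν z1 m1 * fq ν z2 m2) n1 n2 =
      (1 - ν) ^ 2 / ((1 - ν * z1) * (1 - ν * z2)) * (z1 - q * z2) *
        (fq ν z1 n1 * fq ν z2 n2) := by
  rw [boundaryOp_mul_of_shift q ν _ _ (fq_sub_one h1 h1') (fq_sub_one h2 h2'),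
    boundarySymbol_eq q ν z1 z2 (sub_ne_zero.mpr h1'.symm) (sub_ne_zero.mpr h2'.symm)]

theorem stmt16_general (q ν z1 z2 : ℂ)
    (h1 : z1 ≠ 1) (h2 : z2 ≠ 1) (h1' : ν * z1 ≠ 1) (h2' : ν * z2 ≠ 1) :
    (∀ n1 n2 : ℤ,
      ν * (1 - q) * (fq ν z1 (n1 - 1) * fq ν z2 (n2 - 1)) +
        (q - ν) * (fq ν z1 n1 * fq ν z2 (n2 - 1)) +
        (1 - q) * (fq ν z1 n1 * fq ν z2 n2) -
        (1 - q * ν) * (fq ν z1 (n1 - 1) * fq ν z2 n2)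
      = (1 - ν) ^ 2 / ((1 - ν * z1) * (1 - ν * z2)) * (z1 - q * z2) *
          (fq ν z1 n1 * fq ν z2 n2)) ∧
    (∀ n : ℤ,
      (fun u : ℤ → ℤ → ℂ =>
          ν * (1 - q) * u (n - 1) (n - 1) + (q - ν) * u n (n - 1) +
            (1 - q) * u n n - (1 - q * ν) * u (n - 1) n)
        (fun m1 m2 =>
          (z1 - q * z2) * fq ν z2 m1 * fq ν z1 m2 -
            (z2 - q * z1) * fq ν z1 m1 * fq ν z2 m2) = 0) := by
  refine ⟨boundaryOp_fq_mul_fq q h1 h2 h1' h2', fun n => ?_⟩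
  have eigen12 := boundaryOp_fq_mul_fq q h1 h2 h1' h2' n n
  have eigen21 := boundaryOp_fq_mul_fq q h2 h1 h2' h1' n n
  simp only [boundaryOp] at eigen12 eigen21 ⊢
  linear_combination (z1 - q * z2) * eigen21 - (z2 - q * z1) * eigen12

/-- The q-Hahn two-body boundary operator
`(B u)(n₁,n₂) = ν(1-q)u(n₁-1,n₂-1) + (q-ν)u(n₁,n₂-1) + (1-q)u(n₁,n₂) - (1-qν)u(n₁-1,n₂)`
acts diagonally on products of one-particle eigenfunctions; consequently the
antisymmetrized combination satisfies `(B u)(n,n) = 0`. -/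
theorem stmt16 (q ν z1 z2 : ℂ) (hν : ν ≠ 1)
    (h1 : z1 ≠ 1) (h2 : z2 ≠ 1) (h1' : ν * z1 ≠ 1) (h2' : ν * z2 ≠ 1) :
    (∀ n1 n2 : ℤ,
      ν * (1 - q) * (fq ν z1 (n1 - 1) * fq ν z2 (n2 - 1)) +
        (q - ν) * (fq ν z1 n1 * fq ν z2 (n2 - 1)) +
        (1 - q) * (fq ν z1 n1 * fq ν z2 n2) -
        (1 - q * ν) * (fq ν z1 (n1 - 1) * fq ν z2 n2)
      = (1 - ν) ^ 2 / ((1 - ν * z1) * (1 - ν * z2)) * (z1 - q * z2) *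
          (fq ν z1 n1 * fq ν z2 n2)) ∧
    (∀ n : ℤ,
      (fun u : ℤ → ℤ → ℂ =>
          ν * (1 - q) * u (n - 1) (n - 1) + (q - ν) * u n (n - 1) +
            (1 - q) * u n n - (1 - q * ν) * u (n - 1) n)
        (fun m1 m2 =>
          (z1 - q * z2) * fq ν z2 m1 * fq ν z1 m2 -
            (z2 - q * z1) * fq ν z1 m1 * fq ν z2 m2) = 0) :=
  stmt16_general q ν z1 z2 h1 h2 h1' h2'
end

section
/- Limit of q-Boson eigenfunctions to Hall–Littlewood (Van Diejen) eigenfunctions: for fixed n ∈ W^k (n_1 ≥ … ≥ n_k, integers) and fixed pairwise distinct w_1,…,w_k ∈ ℂ∖{0}, one has lim_{ε→0} (-ε)^{-(n_1+…+n_k)} Ψ^{q-Boson}_{(w_1/ε,…,w_k/ε)}(n) = ∑_{σ∈S(k)} ∏_{B<A} (w_{σ(A)} - q w_{σ(B)})/(w_{σ(A)} - w_{σ(B)}) ∏_{j=1}^k w_{σ(j)}^{-n_j}, where Ψ^{q-Boson}_z(n) = ∑_{σ∈S(k)} ∏_{B<A} (z_{σ(A)} - q z_{σ(B)})/(z_{σ(A)}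 - z_{σ(B)}) ∏_{j=1}^k (1 - z_{σ(j)})^{-n_j}. -/
/-
Every term of `Ψ^{q-Boson}_{w/ε}(n)` factors into a Bethe amplitude, which is homogeneous of
degree zero in `z` and hence unchanged by `z ↦ w/ε`, times `∏ⱼ (1 - w_{σ j}/ε)^{-nⱼ}`. Since
`1 - w/ε = (w - ε)/(-ε)`, the prefactor `(-ε)^{-∑ nⱼ}` turns the latter into `∏ⱼ (w_{σ j} - ε)^{-nⱼ}`,
which is continuous at `ε = 0` because every `w_j ≠ 0`.
-/

open Finset Filter

/-- The q-Boson Bethe-ansatz eigenfunction. -/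
noncomputable def PsiQBoson (k : ℕ) (q : ℂ) (z : Fin k → ℂ) (n : Fin k → ℤ) : ℂ :=
  ∑ σ : Equiv.Perm (Fin k),
    (∏ p ∈ Finset.univ.filter (fun p : Fin k × Fin k => p.1 < p.2),
      (z (σ p.2) - q * z (σ p.1)) / (z (σ p.2) - z (σ p.1))) *
    ∏ j : Fin k, (1 - z (σ j)) ^ (-(n j))

noncomputable def betheAmplitude (k : ℕ) (q : ℂ) (z : Fin k → ℂ) (σ : Equiv.Perm (Fin k)) : ℂ :=
  ∏ p ∈ univ.filter (fun p : Fin k × Fin k => p.1 < p.2),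
    (z (σ p.2) - q * z (σ p.1)) / (z (σ p.2) - z (σ p.1))

lemma psiQBoson_eq_sum_betheAmplitude (k : ℕ) (q : ℂ) (z : Fin k → ℂ) (n : Fin k → ℤ) :
    PsiQBoson k q z n = ∑ σ, betheAmplitude k q z σ * ∏ j, (1 - z (σ j)) ^ (-(n j)) :=
  rfl

lemma betheAmplitude_div_const {k : ℕ} (q : ℂ) (z : Fin k → ℂ) (σ : Equiv.Perm (Fin k))
    {c : ℂ} (hc : c ≠ 0) :
    betheAmplitude k q (fun j => z j / c) σ = betheAmplitude k q z σ := by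
  refine prod_congr rfl fun p _ => ?_
  rw [← div_div_div_cancel_right₀ hc (z (σ p.2) - q * z (σ p.1))]
  congr 1 <;> ring

lemma zpow_sum₀ {G₀ : Type*} [CommGroupWithZero G₀] {ι : Type*} {a : G₀} (ha : a ≠ 0)
    (s : Finset ι) (f : ι → ℤ) : a ^ (∑ i ∈ s, f i) = ∏ i ∈ s, a ^ f i := by
  classical
  induction s using Finset.induction_on with
  | empty => simp
  | insert i s hi ih => rw [sum_insert hi, prod_insert hi, zpow_add₀ ha, ih]

lemma neg_zpow_neg_sum_mul_prod_one_sub_div {K : Type*} [Field K] {ι : Type*} (s : Finset ι)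
    (z : ι → K) (m : ι → ℤ) {c : K} (hc : c ≠ 0) :
    (-c) ^ (-∑ i ∈ s, m i) * ∏ i ∈ s, (1 - z i / c) ^ (-(m i)) = ∏ i ∈ s, (z i - c) ^ (-(m i)) := by
  have hc' : -c ≠ 0 := neg_ne_zero.mpr hc
  have factor : ∀ i, (1 - z i / c) ^ (-(m i)) = (-c) ^ m i * (z i - c) ^ (-(m i)) := fun i => by
    rw [show 1 - z i / c = (z i - c) / (-c) by field_simp; ring, div_zpow, zpow_neg (-c),
      div_inv_eq_mul, mul_comm]
  rw [prod_congr rfl fun i _ => factor i, prod_mul_distrib, ← zpow_sum₀ hc', ← mul_assoc,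
    ← zpow_add₀ hc', neg_add_cancel, zpow_zero, one_mul]

lemma tendsto_prod_sub_zpow {ι : Type*} (s : Finset ι) {z : ι → ℂ} (hz : ∀ i, z i ≠ 0)
    (m : ι → ℤ) :
    Tendsto (fun ε : ℝ => ∏ i ∈ s, (z i - ε) ^ m i) (nhdsWithin 0 (Set.Ioi 0))
      (nhds (∏ i ∈ s, z i ^ m i)) := by
  refine tendsto_finsetProd s fun i _ => ?_
  have hbase : Tendsto (fun ε : ℝ => z i - ε) (nhdsWithin 0 (Set.Ioi 0)) (nhds (z i)) := by
    have hcont : Continuous (fun ε : ℝ => z i - ε) := by fun_prop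
    simpa using (hcont.tendsto 0).mono_left nhdsWithin_le_nhds
  exact hbase.zpow₀ _ (Or.inl (hz i))

theorem stmt19_general (k : ℕ) (q : ℂ)
    (n : Fin k → ℤ)
    (w : Fin k → ℂ) (hw0 : ∀ j, w j ≠ 0) :
    Tendsto (fun ε : ℝ =>
        (-(ε : ℂ)) ^ (-∑ j : Fin k, n j) *
          PsiQBoson k q (fun j => w j / (ε : ℂ)) n)
      (nhdsWithin 0 (Set.Ioi 0))
      (nhds (∑ σ : Equiv.Perm (Fin k),
        (∏ p ∈ Finset.univ.filter (fun p : Fin k × Fin k => p.1 < p.2),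
          (w (σ p.2) - q * w (σ p.1)) / (w (σ p.2) - w (σ p.1))) *
        ∏ j : Fin k, (w (σ j)) ^ (-(n j)))) := by
  have rescaled : ∀ ε : ℝ, ε ≠ 0 →
      (-(ε : ℂ)) ^ (-∑ j, n j) * PsiQBoson k q (fun j => w j / (ε : ℂ)) n =
        ∑ σ, betheAmplitude k q w σ * ∏ j, (w (σ j) - ε) ^ (-(n j)) := fun ε hε => by
    have hε' : (ε : ℂ) ≠ 0 := Complex.ofReal_ne_zero.mpr hε
    rw [psiQBoson_eq_sum_betheAmplitude, mul_sum]
    refine sum_congr rfl fun σ _ => ?_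
    rw [betheAmplitude_div_const q w σ hε', mul_left_comm,
      neg_zpow_neg_sum_mul_prod_one_sub_div univ (fun j => w (σ j)) n hε']
  have limit := tendsto_finsetSum univ fun σ _ =>
    (tendsto_prod_sub_zpow univ (fun j => hw0 (σ j)) fun j => -(n j)).const_mul
      (betheAmplitude k q w σ)
  refine limit.congr' ?_
  filter_upwards [self_mem_nhdsWithin] with ε hε
  exact (rescaled ε (ne_of_gt hε)).symm

/-- Limit of q-Boson eigenfunctions to Hall–Littlewood (Van Diejen)
eigenfunctions: `(-ε)^{-(n_1+…+n_k)} Ψ^{q-Boson}_{w/ε}(n)` converges, as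
`ε → 0⁺`, to the Hall–Littlewood-type eigenfunction in the variables `w`. -/
theorem stmt19 (k : ℕ) (q : ℂ)
    (n : Fin k → ℤ) (hn : ∀ i j : Fin k, i ≤ j → n j ≤ n i)
    (w : Fin k → ℂ) (hw0 : ∀ j, w j ≠ 0) (hinj : Function.Injective w) :
    Tendsto (fun ε : ℝ =>
        (-(ε : ℂ)) ^ (-∑ j : Fin k, n j) *
          PsiQBoson k q (fun j => w j / (ε : ℂ)) n)
      (nhdsWithin 0 (Set.Ioi 0))
      (nhds (∑ σ : Equiv.Perm (Fin k),
        (∏ p ∈ Finset.univ.filter (fun p : Fin k × Fin k => p.1 < p.2),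
          (w (σ p.2) - q * w (σ p.1)) / (w (σ p.2) - w (σ p.1))) *
        ∏ j : Fin k, (w (σ j)) ^ (-(n j)))) :=
  stmt19_general k q n w hw0
end
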